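/- arXiv:1607.02822 — 6 statements merged into one kernel-verified Lean document; each statement's English description precedes it below -/
import Mathlib

section
/- If the link capacity tuple C = (C_e, e ∈ E) is achievable for a network with correlated sources (Y_s, s ∈ S), then there exists a polymatroid h on the ground set S ∪ E such that: (i) h(α) = H(Y_s, s ∈ α) for every α ⊆ S; (ii) h(e | {f ∈ S ∪ E : f → e}) = 0 for every e ∈ E; (iii) h(s | {s' ∈ S : u ∈ a(s')} ∪ {f ∈ E : f → u}) = 0 for every s ∈ S and every u ∈ b(s); and (iv) h(e) ≤ C_e for every e ∈ E. In other words, the achievable region R_cs is contained in the linear programming outer bound R_cs(Γ). -/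
open scoped BigOperators

/-- Probability of an event under a pmf `μ` on a finite outcome space. -/
noncomputable def probOf {Ω : Type*} [Fintype Ω] (μ : Ω → ℝ) (E : Set Ω) : ℝ :=
  ∑ ω, E.indicator μ ω

/-- Shannon entropy (in bits) of the random variable `X` on the finite
probability space `(Ω, μ)`. -/
noncomputable def shEntropy {Ω : Type*} {S : Type*} [Fintype Ω] (μ : Ω → ℝ) (X : Ω → S) : ℝ :=
  ∑ ω, μ ω * (- Real.logb 2 (probOf μ {ω' | X ω' = X ω}))

/-- Conditional Shannon entropy `H(Y | X)` (in bits). -/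
noncomputable def shCondEntropy {Ω S T : Type*} [Fintype Ω] (μ : Ω → ℝ)
    (Y : Ω → T) (X : Ω → S) : ℝ :=
  shEntropy μ (fun ω => (X ω, Y ω)) - shEntropy μ X

/-- The support of the random variable `X` (values taken with positive probability). -/
noncomputable def rvSupport {Ω S : Type*} [Fintype Ω] (μ : Ω → ℝ) (X : Ω → S) : Finset S := by
  classical exact (Finset.univ.filter fun ω => 0 < μ ω).image X

/-- `μ` is a probability mass function. -/
def IsPMF {Ω : Type*} [Fintype Ω] (μ : Ω → ℝ) : Prop :=
  (∀ ω, 0 ≤ μ ω) ∧ ∑ ω, μ ω = 1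

/-- A polymatroid on the finite ground set `Z`. -/
def IsPolymatroid {Z : Type*} [DecidableEq Z] (h : Finset Z → ℝ) : Prop :=
  h ∅ = 0 ∧ (∀ A : Finset Z, 0 ≤ h A) ∧ (∀ A B : Finset Z, A ⊆ B → h A ≤ h B) ∧
    ∀ A B : Finset Z, h (A ∩ B) + h (A ∪ B) ≤ h A + h B

/-- A network: a directed acyclic graph with error-free point-to-point links,
source-location map `src` and demand map `snk`. Acyclicity is witnessed by a
topological ordering of the nodes. -/
structure Network (V S E : Type) where
  tail : E → V
  head : E → V
  src : S → Set V
  snk : S → Set V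
  disj : ∀ s, src s ∩ snk s = ∅
  ord : V → ℕ
  acyclic : ∀ e, ord (tail e) < ord (head e)

/-- A block-`N` network code: finite edge alphabets, global edge messages `g`
which are locally encodable (each edge message is a function of the source
blocks available at its tail and of the messages on incoming edges), and
decoding functions at every node. -/
structure NetworkCode {V S E : Type} (net : Network V S E) (𝒴 : S → Type) (N : ℕ) where
  U : E → Type
  fintU : ∀ e, Fintype (U e)
  g : (e : E) → ((s : S) → Fin N → 𝒴 s) → U e
  localEnc : ∀ e : E,
    ∃ φ : ((s : {s : S // net.tail e ∈ net.src s}) → Fin N → 𝒴 s.1) →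
          ((f : {f : E // net.head f = net.tail e}) → U f.1) → U e,
      ∀ y, g e y = φ (fun s => y s.1) (fun f => g f.1 y)
  dec : (s : S) → (u : V) →
    ((s' : {s' : S // u ∈ net.src s'}) → Fin N → 𝒴 s'.1) →
    ((f : {f : E // net.head f = u}) → U f.1) → (Fin N → 𝒴 s)

/-- The error probability at sink `u` for source `s`, when the sources are
i.i.d. (over time) with single-letter joint pmf `p`. -/
noncomputable def errProb {V S E : Type} [Fintype S] [DecidableEq S]
    (net : Network V S E) {𝒴 : S → Type} [∀ s, Fintype (𝒴 s)]
    (p : (∀ s, 𝒴 s) → ℝ) {N : ℕ} (code : NetworkCode net 𝒴 N) (s : S) (u : V) : ℝ :=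
  probOf (fun y : Fin N → (∀ s, 𝒴 s) => ∏ n, p (y n))
    {y | code.dec s u (fun s' n => y n s'.1)
          (fun f => code.g f.1 (fun s'' n => y n s'')) ≠ fun n => y n s}

/-- Achievability of a link capacity tuple `C`: there are block codes of
arbitrarily large blocklength whose rates are within `ε` of `C` and whose
error probabilities at all sinks are at most `ε`. -/
def Achievable {V S E : Type} [Fintype S] [DecidableEq S]
    (net : Network V S E) (𝒴 : S → Type) [∀ s, Fintype (𝒴 s)]
    (p : (∀ s, 𝒴 s) → ℝ) (C : E → ℝ) : Prop :=
  ∀ ε : ℝ, 0 < ε → ∃ N : ℕ, 0 < N ∧ ∃ code : NetworkCode net 𝒴 N,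
    (∀ e : E, Real.logb 2 (@Fintype.card (code.U e) (code.fintU e)) / N ≤ C e + ε) ∧
    ∀ s : S, ∀ u ∈ net.snk s, errProb net p code s u ≤ ε

/-- The ground-set elements `{f ∈ S ∪ E : f → e}` on which the message on edge
`e` must functionally depend. -/
noncomputable def inEdges {V S E : Type} [Fintype S] [Fintype E]
    [DecidableEq S] [DecidableEq E] (net : Network V S E) (e : E) : Finset (S ⊕ E) := by
  classical
  exact (Finset.univ.filter fun s : S => net.tail e ∈ net.src s).image Sum.inl ∪
    (Finset.univ.filter fun f : E => net.head f = net.tail e).image Sum.inr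

/-- The ground-set elements available at node `u`: sources located at `u` and
edges entering `u`. -/
noncomputable def atNode {V S E : Type} [Fintype S] [Fintype E]
    [DecidableEq S] [DecidableEq E] (net : Network V S E) (u : V) : Finset (S ⊕ E) := by
  classical
  exact (Finset.univ.filter fun s : S => u ∈ net.src s).image Sum.inl ∪
    (Finset.univ.filter fun f : E => net.head f = u).image Sum.inr

/-!
For a block-`N` code, the normalized joint entropies `A ↦ H(X_A) / N` of the source blocks and
edge messages form a polymatroid. It matches the source entropies because the sources are i.i.d.,
satisfies the encoding constraints exactly because every message is a function of the inputs of
its edge, the capacity constraints up to the rate slack, and, by Fano's inequality, the decoding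
constraints up to a slack `h(ε) / log 2 + ε log₂ |𝒴 s|` that vanishes with the error
probability `ε`. All these vectors lie in the box `[0, H(Y)]` and the relaxed constraint sets are
closed, so by Cantor's intersection theorem a single polymatroid satisfies every relaxation, hence
the exact constraints.
-/

open Finset Real Filter Topology

section Probability

variable {Ω : Type*} [Fintype Ω] {μ : Ω → ℝ}

noncomputable def probEq {α : Type*} (μ : Ω → ℝ) (X : Ω → α) (a : α) : ℝ :=
  probOf μ {ω | X ω = a}

theorem probOf_eq_sum_filter (μ : Ω → ℝ) (P : Ω → Prop) [DecidablePred P] :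
    probOf μ {ω | P ω} = ∑ ω ∈ univ.filter P, μ ω := by
  rw [probOf, sum_filter]
  exact sum_congr rfl fun ω _ => Set.indicator_apply _ _ _

theorem probOf_mono (h0 : ∀ ω, 0 ≤ μ ω) {E F : Set Ω} (hEF : E ⊆ F) :
    probOf μ E ≤ probOf μ F :=
  sum_le_sum fun ω _ => Set.indicator_le_indicator_of_subset hEF h0 ω

theorem probOf_nonneg (h0 : ∀ ω, 0 ≤ μ ω) (E : Set Ω) : 0 ≤ probOf μ E :=
  sum_nonneg fun ω _ => Set.indicator_nonneg (fun ω _ => h0 ω) ω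

theorem probOf_univ (h : IsPMF μ) : probOf μ Set.univ = 1 := by
  simpa [probOf] using h.2

theorem probOf_le_one (h : IsPMF μ) (E : Set Ω) : probOf μ E ≤ 1 :=
  probOf_univ h ▸ probOf_mono h.1 (Set.subset_univ E)

theorem le_probEq_self (h0 : ∀ ω, 0 ≤ μ ω) {α : Type*} (X : Ω → α) (ω : Ω) :
    μ ω ≤ probEq μ X (X ω) := by
  classical
  rw [probEq, probOf_eq_sum_filter]
  exact single_le_sum (f := μ) (fun ω _ => h0 ω) (by simp)

theorem probEq_pos (h0 : ∀ ω, 0 ≤ μ ω) {α : Type*} (X : Ω → α) {ω : Ω} (hω : 0 < μ ω) :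
    0 < probEq μ X (X ω) :=
  hω.trans_le (le_probEq_self h0 X ω)

theorem probEq_nonneg (h0 : ∀ ω, 0 ≤ μ ω) {α : Type*} (X : Ω → α) (a : α) :
    0 ≤ probEq μ X a :=
  probOf_nonneg h0 _

theorem sum_probEq (μ : Ω → ℝ) {α : Type*} [DecidableEq α] (X : Ω → α) (t : Finset α) :
    ∑ a ∈ t, probEq μ X a = probOf μ {ω | X ω ∈ t} := by
  simp only [probEq, probOf, Set.indicator_apply, Set.mem_ofPred_eq]
  rw [sum_comm]
  exact sum_congr rfl fun ω _ => by rw [sum_ite_eq]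

theorem sum_mul_comp (μ : Ω → ℝ) {α : Type*} [DecidableEq α] (X : Ω → α) (f : α → ℝ)
    {t : Finset α} (ht : ∀ ω, X ω ∈ t) :
    ∑ ω, μ ω * f (X ω) = ∑ a ∈ t, probEq μ X a * f a := by
  simp only [probEq, probOf, Set.indicator_apply, Set.mem_ofPred_eq, sum_mul, ite_mul, zero_mul]
  rw [sum_comm]
  exact sum_congr rfl fun ω _ => by rw [sum_ite_eq t (X ω) (fun a => μ ω * f a), if_pos (ht ω)]

end Probability

/-- Gibbs' inequality, from `log x ≤ x - 1`. -/
theorem sum_mul_logb_le {ι : Type*} (s : Finset ι) (w t : ι → ℝ) {c : ℝ} (hc : 0 < c)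
    (hw : ∀ i ∈ s, 0 ≤ w i) (ht : ∀ i ∈ s, 0 < w i → 0 < t i)
    (hwt : ∑ i ∈ s, w i * t i ≤ c * ∑ i ∈ s, w i) :
    ∑ i ∈ s, w i * logb 2 (t i) ≤ (∑ i ∈ s, w i) * logb 2 c := by
  have hlog2 : 0 < log 2 := log_pos one_lt_two
  have term : ∀ i ∈ s, w i * logb 2 (t i) ≤ w i * logb 2 c + (w i * t i / c - w i) / log 2 := by
    intro i hi
    rcases (hw i hi).eq_or_lt with hw0 | hwpos
    · simp [← hw0]
    have hti := ht i hi hwpos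
    have hgibbs : log (t i / c) ≤ t i / c - 1 := log_le_sub_one_of_pos (div_pos hti hc)
    rw [log_div hti.ne' hc.ne'] at hgibbs
    have : logb 2 (t i) ≤ logb 2 c + (t i / c - 1) / log 2 := by
      rw [logb, logb, ← add_div]
      exact div_le_div_of_nonneg_right (by linarith) hlog2.le
    calc w i * logb 2 (t i) ≤ w i * (logb 2 c + (t i / c - 1) / log 2) :=
          mul_le_mul_of_nonneg_left this hwpos.le
      _ = _ := by ring
  have hslack : ∑ i ∈ s, (w i * t i / c - w i) / log 2 ≤ 0 := by
    rw [← sum_div, sum_sub_distrib, ← sum_div]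
    refine div_nonpos_of_nonpos_of_nonneg ?_ hlog2.le
    rw [sub_nonpos, div_le_iff₀ hc]
    linarith
  calc ∑ i ∈ s, w i * logb 2 (t i)
      ≤ ∑ i ∈ s, (w i * logb 2 c + (w i * t i / c - w i) / log 2) := sum_le_sum term
    _ ≤ (∑ i ∈ s, w i) * logb 2 c := by rw [sum_add_distrib, ← sum_mul]; linarith

section Entropy

variable {Ω : Type*} [Fintype Ω] {μ : Ω → ℝ} {α β γ : Type*}

theorem shEntropy_eq_sum (X : Ω → α) :
    shEntropy μ X = ∑ ω, μ ω * -logb 2 (probEq μ X (X ω)) := rfl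

theorem IsPMF.nonempty (h : IsPMF μ) : Nonempty Ω := by
  by_contra hΩ
  have := h.2
  simp [not_nonempty_iff.mp hΩ] at this

theorem shEntropy_nonneg (h : IsPMF μ) (X : Ω → α) : 0 ≤ shEntropy μ X :=
  sum_nonneg fun ω _ => mul_nonneg (h.1 ω) <| neg_nonneg.mpr <|
    logb_nonpos one_lt_two (probOf_nonneg h.1 _) (probOf_le_one h _)

theorem shEntropy_le_of_determined (h : IsPMF μ) {X : Ω → α} {Y : Ω → β}
    (hXY : ∀ ω ω', X ω = X ω' → Y ω = Y ω') : shEntropy μ Y ≤ shEntropy μ X := by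
  refine sum_le_sum fun ω _ => ?_
  rcases (h.1 ω).eq_or_lt with hω | hω
  · simp [← hω]
  refine mul_le_mul_of_nonneg_left (neg_le_neg ?_) hω.le
  exact logb_le_logb_of_le one_lt_two (probEq_pos h.1 X hω)
    (probOf_mono h.1 fun ω' hω' => hXY ω' ω hω')

theorem shEntropy_congr (h : IsPMF μ) {X : Ω → α} {Y : Ω → β}
    (hXY : ∀ ω ω', X ω = X ω' ↔ Y ω = Y ω') : shEntropy μ X = shEntropy μ Y :=
  le_antisymm (shEntropy_le_of_determined h fun ω ω' => (hXY ω ω').mpr)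
    (shEntropy_le_of_determined h fun ω ω' => (hXY ω ω').mp)

theorem shEntropy_const (h : IsPMF μ) (c : α) : shEntropy μ (fun _ => c) = 0 := by
  have hc : probEq μ (fun _ => c) c = 1 := by simpa [probEq] using probOf_univ h
  simp [shEntropy_eq_sum, hc]

theorem sum_mul_div_probEq_le (h0 : ∀ ω, 0 ≤ μ ω) [DecidableEq α] (X : Ω → α) {f : α → ℝ}
    (hf : ∀ a, 0 ≤ f a) :
    ∑ ω, μ ω * (f (X ω) / probEq μ X (X ω)) ≤ ∑ a ∈ univ.image X, f a := by
  rw [sum_mul_comp μ X (fun a => f a / probEq μ X a) fun ω => mem_image_of_mem X (mem_univ ω)]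
  refine sum_le_sum fun a _ => ?_
  rcases (probEq_nonneg h0 X a).eq_or_lt with hP | hP
  · rw [← hP, zero_mul]
    exact hf a
  · rw [← mul_div_assoc, mul_div_cancel_left₀ _ hP.ne']

theorem sum_probEq_prod_le (h0 : ∀ ω, 0 ≤ μ ω) [DecidableEq α] [DecidableEq γ]
    (X : Ω → α) (Z : Ω → γ) (s : Finset α) (c : γ) :
    ∑ a ∈ s, probEq μ (fun ω => (X ω, Z ω)) (a, c) ≤ probEq μ Z c := by
  calc ∑ a ∈ s, probEq μ (fun ω => (X ω, Z ω)) (a, c)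
      = ∑ v ∈ s ×ˢ {c}, probEq μ (fun ω => (X ω, Z ω)) v := by rw [sum_product]; simp
    _ = probOf μ {ω | (X ω, Z ω) ∈ s ×ˢ {c}} := sum_probEq μ _ _
    _ ≤ probEq μ Z c := probOf_mono h0 fun ω hω => (mem_product.mp hω).2 |> mem_singleton.mp

theorem sum_image_condIndep_le (h : IsPMF μ) [DecidableEq α] [DecidableEq β] [DecidableEq γ]
    (X : Ω → α) (Y : Ω → β) (Z : Ω → γ) :
    ∑ v ∈ univ.image (fun ω => (X ω, Y ω, Z ω)),
      probEq μ (fun ω => (X ω, Z ω)) (v.1, v.2.2) * probEq μ (fun ω => (Y ω, Z ω)) (v.2.1, v.2.2) /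
        probEq μ Z v.2.2 ≤ 1 := by
  set PXZ := probEq μ (fun ω => (X ω, Z ω))
  set PYZ := probEq μ (fun ω => (Y ω, Z ω))
  set PZ := probEq μ Z
  have hXZ : ∀ w, 0 ≤ PXZ w := probEq_nonneg h.1 _
  have hYZ : ∀ w, 0 ≤ PYZ w := probEq_nonneg h.1 _
  have hZ : ∀ w, 0 ≤ PZ w := probEq_nonneg h.1 _
  have hsub : univ.image (fun ω => (X ω, Y ω, Z ω)) ⊆
      univ.image X ×ˢ univ.image Y ×ˢ univ.image Z := by
    intro v hv
    obtain ⟨ω, -, rfl⟩ := mem_image.mp hv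
    simp
  calc _ ≤ ∑ v ∈ univ.image X ×ˢ univ.image Y ×ˢ univ.image Z,
        PXZ (v.1, v.2.2) * PYZ (v.2.1, v.2.2) / PZ v.2.2 :=
        sum_le_sum_of_subset_of_nonneg hsub fun v _ _ =>
          div_nonneg (mul_nonneg (hXZ _) (hYZ _)) (hZ _)
    _ = ∑ z ∈ univ.image Z,
        (∑ x ∈ univ.image X, PXZ (x, z)) * (∑ y ∈ univ.image Y, PYZ (y, z)) / PZ z := by
        simp_rw [sum_product, sum_mul_sum, sum_div]
        conv_rhs => rw [sum_comm]
        exact sum_congr rfl fun _ _ => sum_comm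
    _ ≤ ∑ z ∈ univ.image Z, PZ z * PZ z / PZ z :=
        sum_le_sum fun z _ => div_le_div_of_nonneg_right
          (mul_le_mul (sum_probEq_prod_le h.1 X Z _ z) (sum_probEq_prod_le h.1 Y Z _ z)
            (sum_nonneg fun _ _ => hYZ _) (hZ _)) (hZ _)
    _ = ∑ z ∈ univ.image Z, PZ z := sum_congr rfl fun z _ => mul_self_div_self (PZ z)
    _ = 1 := by
        rw [sum_probEq, ← probOf_univ h]
        congr 1
        ext ω
        simp

theorem shEntropy_submodular (h : IsPMF μ) (X : Ω → α) (Y : Ω → β) (Z : Ω → γ) :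
    shEntropy μ Z + shEntropy μ (fun ω => (X ω, Y ω, Z ω)) ≤
      shEntropy μ (fun ω => (X ω, Z ω)) + shEntropy μ (fun ω => (Y ω, Z ω)) := by
  classical
  set T := fun ω => (X ω, Y ω, Z ω)
  set PXZ := probEq μ (fun ω => (X ω, Z ω))
  set PYZ := probEq μ (fun ω => (Y ω, Z ω))
  set PZ := probEq μ Z
  set PT := probEq μ T
  set t : Ω → ℝ := fun ω => PXZ (X ω, Z ω) * PYZ (Y ω, Z ω) / (PZ (Z ω) * PT (T ω))
  -- `t` is the likelihood ratio of the conditionally independent coupling given `Z`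
  have hratio : ∑ ω, μ ω * t ω ≤ 1 * ∑ ω, μ ω := by
    rw [h.2, one_mul]
    calc ∑ ω, μ ω * t ω
        = ∑ ω, μ ω * (PXZ ((T ω).1, (T ω).2.2) * PYZ ((T ω).2.1, (T ω).2.2) / PZ (T ω).2.2 /
            PT (T ω)) := by simp only [t, div_div]; rfl
      _ ≤ _ := sum_mul_div_probEq_le h.1 T
            (f := fun v => PXZ (v.1, v.2.2) * PYZ (v.2.1, v.2.2) / PZ v.2.2) fun v =>
            div_nonneg (mul_nonneg (probEq_nonneg h.1 _ _) (probEq_nonneg h.1 _ _))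
              (probEq_nonneg h.1 _ _)
      _ ≤ 1 := sum_image_condIndep_le h X Y Z
  have hterm : ∀ ω, μ ω * logb 2 (t ω) =
      (μ ω * -logb 2 (PZ (Z ω)) + μ ω * -logb 2 (PT (T ω))) -
        (μ ω * -logb 2 (PXZ (X ω, Z ω)) + μ ω * -logb 2 (PYZ (Y ω, Z ω))) := by
    intro ω
    rcases (h.1 ω).eq_or_lt with hω | hω
    · simp [← hω]
    have hXZ := probEq_pos h.1 (fun ω => (X ω, Z ω)) hω
    have hYZ := probEq_pos h.1 (fun ω => (Y ω, Z ω)) hω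
    have hZ := probEq_pos h.1 Z hω
    have hT := probEq_pos h.1 T hω
    simp only [t]
    rw [logb_div (mul_pos hXZ hYZ).ne' (mul_pos hZ hT).ne', logb_mul hXZ.ne' hYZ.ne',
      logb_mul hZ.ne' hT.ne']
    ring
  have hgibbs := sum_mul_logb_le univ μ t one_pos (fun ω _ => h.1 ω)
    (fun ω _ hω => div_pos (mul_pos (probEq_pos h.1 (fun ω => (X ω, Z ω)) hω)
      (probEq_pos h.1 (fun ω => (Y ω, Z ω)) hω))
      (mul_pos (probEq_pos h.1 Z hω) (probEq_pos h.1 T hω))) hratio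
  rw [logb_one, mul_zero, sum_congr rfl fun ω _ => hterm ω, sum_sub_distrib, sum_add_distrib,
    sum_add_distrib] at hgibbs
  simp only [shEntropy_eq_sum]
  linarith

theorem shEntropy_prod_le_add (h : IsPMF μ) (X : Ω → α) (Y : Ω → β) :
    shEntropy μ (fun ω => (X ω, Y ω)) ≤ shEntropy μ X + shEntropy μ Y := by
  have key := shEntropy_submodular h X Y (fun _ => ())
  have hXY : shEntropy μ (fun ω => (X ω, Y ω, ())) = shEntropy μ (fun ω => (X ω, Y ω)) :=
    shEntropy_congr h fun _ _ => by simp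
  have hX : shEntropy μ (fun ω => (X ω, ())) = shEntropy μ X := shEntropy_congr h fun _ _ => by simp
  have hY : shEntropy μ (fun ω => (Y ω, ())) = shEntropy μ Y := shEntropy_congr h fun _ _ => by simp
  rwa [shEntropy_const h, zero_add, hXY, hX, hY] at key

theorem sum_filter_mul_probEq_div_le [Fintype β] (h0 : ∀ ω, 0 ≤ μ ω) [DecidableEq α]
    [DecidableEq β] (X : Ω → α) (Y : Ω → β) (G : α → Prop) [DecidablePred G] :
    ∑ ω ∈ univ.filter (fun ω => G (X ω)),
        μ ω * (probEq μ X (X ω) / probEq μ (fun ω => (X ω, Y ω)) (X ω, Y ω)) ≤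
      Fintype.card β * probOf μ {ω | G (X ω)} := by
  set XY := fun ω => (X ω, Y ω)
  set F : α × β → ℝ := fun v => if G v.1 then probEq μ X v.1 else 0
  have hF : ∀ v, 0 ≤ F v := fun v => by
    simp only [F]; split_ifs <;> simp [probEq_nonneg h0]
  calc _ = ∑ ω, μ ω * (F (XY ω) / probEq μ XY (XY ω)) := by
        rw [sum_filter]
        exact sum_congr rfl fun ω _ => by simp only [F, XY]; split_ifs <;> simp
    _ ≤ ∑ v ∈ univ.image XY, F v := sum_mul_div_probEq_le h0 XY hF
    _ ≤ ∑ v ∈ univ.image X ×ˢ univ, F v :=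
        sum_le_sum_of_subset_of_nonneg (fun v hv => by
          obtain ⟨ω, -, rfl⟩ := mem_image.mp hv
          simp [XY]) fun v _ _ => hF v
    _ = Fintype.card β * ∑ x ∈ (univ.image X).filter G, probEq μ X x := by
        rw [sum_product, mul_sum, sum_filter]
        simp [F]
    _ = Fintype.card β * probOf μ {ω | G (X ω)} := by
        rw [sum_probEq]
        congr 2
        ext ω
        simp

/-- The core of Fano's inequality. -/
theorem shEntropy_prod_le_of_determined_off [Fintype β] (h : IsPMF μ) (X : Ω → α) (Y : Ω → β)
    (G : α → Prop) (hdet : ∀ ω ω', X ω = X ω' → ¬ G (X ω) → Y ω = Y ω') :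
    shEntropy μ (fun ω => (X ω, Y ω)) ≤
      shEntropy μ X + probOf μ {ω | G (X ω)} * logb 2 (Fintype.card β) := by
  classical
  obtain ⟨ω₀⟩ := h.nonempty
  have hβ : (0 : ℝ) < Fintype.card β := by
    have : Nonempty β := ⟨Y ω₀⟩
    exact_mod_cast Fintype.card_pos
  set XY := fun ω => (X ω, Y ω)
  set t : Ω → ℝ := fun ω => probEq μ X (X ω) / probEq μ XY (XY ω)
  have hoff : ∀ ω, ¬ G (X ω) → probEq μ XY (XY ω) = probEq μ X (X ω) := fun ω hG => by
    refine congrArg (probOf μ) (Set.ext fun ω' => ⟨fun hω' => congrArg Prod.fst hω', fun hω' => ?_⟩)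
    exact Prod.ext hω' (hdet ω' ω hω' (hω' ▸ hG))
  have hterm : ∀ ω, μ ω * -logb 2 (probEq μ XY (XY ω)) - μ ω * -logb 2 (probEq μ X (X ω)) =
      if G (X ω) then μ ω * logb 2 (t ω) else 0 := by
    intro ω
    split_ifs with hG
    · rcases (h.1 ω).eq_or_lt with hω | hω
      · simp [← hω]
      rw [logb_div (probEq_pos h.1 X hω).ne' (probEq_pos h.1 XY hω).ne']
      ring
    · rw [hoff ω hG, sub_self]
  have hgibbs := sum_mul_logb_le (univ.filter fun ω => G (X ω)) μ t hβ (fun ω _ => h.1 ω)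
    (fun ω _ hω => div_pos (probEq_pos h.1 X hω) (probEq_pos h.1 XY hω))
    (by rw [← probOf_eq_sum_filter μ (fun ω => G (X ω))]
        exact sum_filter_mul_probEq_div_le h.1 X Y G)
  rw [← probOf_eq_sum_filter μ (fun ω => G (X ω)), sum_filter] at hgibbs
  have hdiff : shEntropy μ XY - shEntropy μ X = ∑ ω, if G (X ω) then μ ω * logb 2 (t ω) else 0 := by
    rw [shEntropy_eq_sum, shEntropy_eq_sum, ← sum_sub_distrib]
    exact sum_congr rfl fun ω _ => hterm ω
  linarith

theorem shEntropy_le_logb_card [Fintype β] (h : IsPMF μ) (Y : Ω → β) :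
    shEntropy μ Y ≤ logb 2 (Fintype.card β) := by
  have key := shEntropy_prod_le_of_determined_off h (fun _ => ()) Y (fun _ => True)
    fun _ _ _ hG => absurd trivial hG
  rwa [shEntropy_const h, zero_add, Set.ofPred_true, probOf_univ h, one_mul,
    shEntropy_congr h (Y := Y) fun ω ω' => by simp] at key

theorem shEntropy_bool (h : IsPMF μ) (B : Ω → Bool) :
    shEntropy μ B = binEntropy (probEq μ B true) / log 2 := by
  classical
  have hsum : probEq μ B true + probEq μ B false = 1 := by
    rw [← Fintype.sum_bool, sum_probEq, ← probOf_univ h]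
    congr 1
    ext
    simp
  rw [shEntropy_eq_sum, sum_mul_comp μ B (fun b => -logb 2 (probEq μ B b)) fun _ => mem_univ _,
    Fintype.sum_bool, show probEq μ B false = 1 - probEq μ B true by linarith]
  simp only [binEntropy, log_inv, logb]
  ring

/-- Fano's inequality, with `d` the decoder of `Y` from `X`. -/
theorem shEntropy_prod_le_fano [Fintype β] (h : IsPMF μ) (X : Ω → α) (Y : Ω → β) (d : α → β) :
    shEntropy μ (fun ω => (X ω, Y ω)) ≤ shEntropy μ X +
      binEntropy (probOf μ {ω | d (X ω) ≠ Y ω}) / log 2 +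
        probOf μ {ω | d (X ω) ≠ Y ω} * logb 2 (Fintype.card β) := by
  classical
  set err : Ω → Bool := fun ω => decide (d (X ω) ≠ Y ω)
  have herr : {ω | err ω = true} = {ω | d (X ω) ≠ Y ω} := by ext; simp [err]
  have hdet : ∀ ω ω', (X ω, err ω) = (X ω', err ω') → ¬ (X ω, err ω).2 = true → Y ω = Y ω' := by
    intro ω ω' hω hG
    obtain ⟨hX, hE⟩ := Prod.mk.inj hω
    have hG' : ¬ err ω' = true := hE ▸ hG
    simp only [err, decide_eq_true_eq, not_not] at hG hG'
    rw [← hG, ← hG', hX]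
  set L := logb 2 (Fintype.card β)
  calc shEntropy μ (fun ω => (X ω, Y ω))
      = shEntropy μ (fun ω => ((X ω, err ω), Y ω)) := shEntropy_congr h fun ω ω' => by
        simp only [Prod.mk.injEq, err]
        constructor
        · rintro ⟨hX, hY⟩; simp [hX, hY]
        · exact fun hXY => ⟨hXY.1.1, hXY.2⟩
    _ ≤ shEntropy μ (fun ω => (X ω, err ω)) + probEq μ err true * L :=
        shEntropy_prod_le_of_determined_off h (fun ω => (X ω, err ω)) Y (fun v => v.2 = true) hdet
    _ ≤ shEntropy μ X + shEntropy μ err + probEq μ err true * L := by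
        gcongr; exact shEntropy_prod_le_add h X err
    _ = _ := by rw [shEntropy_bool h, probEq, herr]

end Entropy

noncomputable def blockPMF {Ω : Type*} (μ : Ω → ℝ) (N : ℕ) : (Fin N → Ω) → ℝ :=
  fun y => ∏ n, μ (y n)

section Block

variable {Ω : Type*} [Fintype Ω] {μ : Ω → ℝ} {α : Type*}

theorem blockPMF_isPMF (h : IsPMF μ) (N : ℕ) : IsPMF (blockPMF μ N) :=
  ⟨fun y => prod_nonneg fun n _ => h.1 (y n),
    (Fintype.prod_sum fun (_ : Fin N) x => μ x).symm.trans (by simp [h.2])⟩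

theorem sum_blockPMF_mul_apply (h : IsPMF μ) {N : ℕ} (n : Fin N) (f : Ω → ℝ) :
    ∑ y, blockPMF μ N y * f (y n) = ∑ x, μ x * f x := by
  have hfactor : ∀ y : Fin N → Ω,
      ∏ m, μ (y m) * (if m = n then f (y m) else 1) = blockPMF μ N y * f (y n) := fun y => by
    rw [prod_mul_distrib, prod_ite_eq' univ n (fun m => f (y m))]
    simp [blockPMF]
  have hfactors : ∀ m, ∑ x, μ x * (if m = n then f x else 1) =
      if m = n then ∑ x, μ x * f x else 1 := fun m => by
    split_ifs <;> simp [h.2]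
  simp_rw [← hfactor, ← Fintype.prod_sum fun m x => μ x * (if m = n then f x else 1), hfactors,
    prod_ite_eq' univ n, if_pos (mem_univ n)]

theorem probEq_block (X : Ω → α) {N : ℕ} (a : Fin N → α) :
    probEq (blockPMF μ N) (fun y n => X (y n)) a = ∏ n, probEq μ X (a n) := by
  classical
  simp only [probEq, probOf_eq_sum_filter, sum_filter, blockPMF]
  rw [Fintype.prod_sum fun n x => if X x = a n then μ x else 0]
  refine sum_congr rfl fun y _ => ?_
  rw [prod_ite_zero]
  simp only [mem_univ, true_implies, funext_iff]

theorem shEntropy_block (h : IsPMF μ) (X : Ω → α) (N : ℕ) :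
    shEntropy (blockPMF μ N) (fun y n => X (y n)) = N * shEntropy μ X := by
  have hterm : ∀ y : Fin N → Ω,
      blockPMF μ N y * -logb 2 (probEq (blockPMF μ N) (fun y n => X (y n)) fun n => X (y n)) =
        ∑ n, blockPMF μ N y * -logb 2 (probEq μ X (X (y n))) := fun y => by
    rcases (blockPMF_isPMF h N).1 y |>.eq_or_lt with hy | hy
    · simp [← hy]
    have hpos : ∀ n, 0 < μ (y n) := fun n =>
      (h.1 (y n)).lt_of_ne fun h0 => hy.ne' (prod_eq_zero (mem_univ n) h0.symm)
    rw [probEq_block, logb_prod _ _ fun n _ => (probEq_pos h.1 X (hpos n)).ne', ← sum_neg_distrib,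
      mul_sum]
  rw [shEntropy_eq_sum, sum_congr rfl fun y _ => hterm y, sum_comm]
  rw [sum_congr rfl fun n _ => sum_blockPMF_mul_apply h n fun x => -logb 2 (probEq μ X (X x))]
  simp [shEntropy_eq_sum]

end Block

noncomputable def jointEntropy {Ω Z : Type*} [Fintype Ω] {T : Z → Type*} (μ : Ω → ℝ)
    (X : (z : Z) → Ω → T z) (A : Finset Z) : ℝ :=
  shEntropy μ (fun ω (z : A) => X z ω)

section JointEntropy

variable {Ω Z : Type*} {T : Z → Type*} {X : (z : Z) → Ω → T z}

theorem restrict_eq_restrict_iff {A : Finset Z} {ω ω' : Ω} :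
    (fun (z : A) => X z ω) = (fun (z : A) => X z ω') ↔ ∀ z ∈ A, X z ω = X z ω' := by
  simp [funext_iff]

variable [Fintype Ω] {μ : Ω → ℝ}

theorem jointEntropy_le_of_determined (h : IsPMF μ) {A B : Finset Z}
    (hAB : ∀ ω ω', (∀ z ∈ B, X z ω = X z ω') → ∀ z ∈ A, X z ω = X z ω') :
    jointEntropy μ X A ≤ jointEntropy μ X B :=
  shEntropy_le_of_determined h fun ω ω' hB => by
    rw [restrict_eq_restrict_iff] at hB ⊢
    exact hAB ω ω' hB

theorem jointEntropy_mono (h : IsPMF μ) {A B : Finset Z} (hAB : A ⊆ B) :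
    jointEntropy μ X A ≤ jointEntropy μ X B :=
  jointEntropy_le_of_determined h fun _ _ hB z hz => hB z (hAB hz)

theorem jointEntropy_le_shEntropy_id (h : IsPMF μ) (A : Finset Z) :
    jointEntropy μ X A ≤ shEntropy μ id :=
  shEntropy_le_of_determined h fun _ _ hω => congrArg (fun ω (z : A) => X z ω) hω

theorem jointEntropy_empty (h : IsPMF μ) : jointEntropy μ X ∅ = 0 := by
  rw [jointEntropy, ← shEntropy_const h ()]
  exact shEntropy_congr h fun ω ω' => by simp [restrict_eq_restrict_iff]

theorem jointEntropy_singleton (h : IsPMF μ) (z : Z) :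
    jointEntropy μ X {z} = shEntropy μ (X z) :=
  shEntropy_congr h fun ω ω' => by simp [restrict_eq_restrict_iff]

variable [DecidableEq Z]

theorem jointEntropy_insert (h : IsPMF μ) (z : Z) (A : Finset Z) :
    jointEntropy μ X (insert z A) = shEntropy μ (fun ω => (fun (a : A) => X a ω, X z ω)) :=
  shEntropy_congr h fun ω ω' => by simp [restrict_eq_restrict_iff, and_comm]

theorem jointEntropy_insert_eq_of_determined (h : IsPMF μ) {z : Z} {A : Finset Z}
    (hz : ∀ ω ω', (∀ a ∈ A, X a ω = X a ω') → X z ω = X z ω') :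
    jointEntropy μ X (insert z A) = jointEntropy μ X A :=
  le_antisymm (jointEntropy_le_of_determined h fun ω ω' hA a ha => by
      rcases mem_insert.mp ha with rfl | ha
      exacts [hz ω ω' hA, hA a ha])
    (jointEntropy_mono h (subset_insert z A))

theorem jointEntropy_inter_add_union_le (h : IsPMF μ) (A B : Finset Z) :
    jointEntropy μ X (A ∩ B) + jointEntropy μ X (A ∪ B) ≤
      jointEntropy μ X A + jointEntropy μ X B := by
  have key := shEntropy_submodular h (fun ω (z : A) => X z ω) (fun ω (z : B) => X z ω)
    (fun ω (z : (A ∩ B : Finset Z)) => X z ω)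
  have hA : shEntropy μ (fun ω => (fun (z : A) => X z ω, fun (z : (A ∩ B : Finset Z)) => X z ω)) =
      jointEntropy μ X A :=
    shEntropy_congr h fun ω ω' => by simp only [Prod.mk.injEq, restrict_eq_restrict_iff]; aesop
  have hB : shEntropy μ (fun ω => (fun (z : B) => X z ω, fun (z : (A ∩ B : Finset Z)) => X z ω)) =
      jointEntropy μ X B :=
    shEntropy_congr h fun ω ω' => by simp only [Prod.mk.injEq, restrict_eq_restrict_iff]; aesop
  have hAB : shEntropy μ (fun ω => (fun (z : A) => X z ω, fun (z : B) => X z ω,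
      fun (z : (A ∩ B : Finset Z)) => X z ω)) = jointEntropy μ X (A ∪ B) :=
    shEntropy_congr h fun ω ω' => by simp only [Prod.mk.injEq, restrict_eq_restrict_iff]; aesop
  rw [hA, hB, hAB] at key
  exact key

theorem isPolymatroid_jointEntropy (h : IsPMF μ) : IsPolymatroid (jointEntropy μ X) :=
  ⟨jointEntropy_empty h, fun _ => shEntropy_nonneg h _, fun _ _ => jointEntropy_mono h,
    jointEntropy_inter_add_union_le h⟩

end JointEntropy

theorem IsPolymatroid.div_const {Z : Type*} [DecidableEq Z] {h : Finset Z → ℝ}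
    (hh : IsPolymatroid h) {c : ℝ} (hc : 0 ≤ c) : IsPolymatroid (fun A => h A / c) :=
  ⟨by simp [hh.1], fun A => div_nonneg (hh.2.1 A) hc,
    fun A B hAB => div_le_div_of_nonneg_right (hh.2.2.1 A B hAB) hc,
    fun A B => by rw [← add_div, ← add_div]; exact div_le_div_of_nonneg_right (hh.2.2.2 A B) hc⟩

section Network

variable {V S E : Type} [Fintype S] [Fintype E] [DecidableEq S] [DecidableEq E]
  {net : Network V S E}

@[simp] theorem inl_mem_inEdges {e : E} {s : S} :
    Sum.inl s ∈ inEdges net e ↔ net.tail e ∈ net.src s := by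
  simp [inEdges]

@[simp] theorem inr_mem_inEdges {e f : E} :
    Sum.inr f ∈ inEdges net e ↔ net.head f = net.tail e := by
  simp [inEdges]

@[simp] theorem inl_mem_atNode {u : V} {s : S} : Sum.inl s ∈ atNode net u ↔ u ∈ net.src s := by
  simp [atNode]

@[simp] theorem inr_mem_atNode {u : V} {f : E} : Sum.inr f ∈ atNode net u ↔ net.head f = u := by
  simp [atNode]

end Network

namespace NetworkCode

variable {V S E : Type} {net : Network V S E} {𝒴 : S → Type} {N : ℕ}

def Val (code : NetworkCode net 𝒴 N) : S ⊕ E → Type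
  | .inl s => Fin N → 𝒴 s
  | .inr e => code.U e

def val (code : NetworkCode net 𝒴 N) : (z : S ⊕ E) → (Fin N → ∀ s, 𝒴 s) → code.Val z
  | .inl s => fun y n => y n s
  | .inr e => fun y => code.g e fun s n => y n s

variable [Fintype S] [DecidableEq S] [∀ s, Fintype (𝒴 s)]

noncomputable def entropyVec (code : NetworkCode net 𝒴 N) (p : (∀ s, 𝒴 s) → ℝ)
    (A : Finset (S ⊕ E)) : ℝ :=
  jointEntropy (blockPMF p N) code.val A / N

variable (code : NetworkCode net 𝒴 N) {p : (∀ s, 𝒴 s) → ℝ}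

theorem entropyVec_le_shEntropy (hp : IsPMF p) (A : Finset (S ⊕ E)) :
    code.entropyVec p A ≤ shEntropy p id := by
  rcases N.eq_zero_or_pos with rfl | hN
  · simp [entropyVec, shEntropy_nonneg hp]
  rw [entropyVec, div_le_iff₀ (by exact_mod_cast hN), mul_comm, ← shEntropy_block hp id]
  exact jointEntropy_le_shEntropy_id (blockPMF_isPMF hp N) A

theorem entropyVec_singleton_inr_le (hp : IsPMF p) (e : E) :
    code.entropyVec p {Sum.inr e} ≤ logb 2 (@Fintype.card (code.U e) (code.fintU e)) / N := by
  let : Fintype (code.Val (.inr e)) := code.fintU e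
  rw [entropyVec, jointEntropy_singleton (blockPMF_isPMF hp N)]
  exact div_le_div_of_nonneg_right (shEntropy_le_logb_card (blockPMF_isPMF hp N) _) N.cast_nonneg

variable [DecidableEq E]

theorem isPolymatroid_entropyVec (hp : IsPMF p) : IsPolymatroid (code.entropyVec p) :=
  (isPolymatroid_jointEntropy (blockPMF_isPMF hp N)).div_const N.cast_nonneg

theorem entropyVec_sources (hp : IsPMF p) (hN : 0 < N) (α : Finset S) :
    code.entropyVec p (α.image Sum.inl) = shEntropy p (fun y (s : α) => y s.1) := by
  have hblock : jointEntropy (blockPMF p N) code.val (α.image Sum.inl) =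
      shEntropy (blockPMF p N) (fun y n (s : α) => y n s.1) :=
    shEntropy_congr (blockPMF_isPMF hp N) fun y y' => by
      simp only [mem_image, forall_exists_index, and_imp, forall_apply_eq_imp_iff₂, funext_iff,
        Subtype.forall, val]
      exact ⟨fun h n a ha => congrFun (h a ha) n, fun h a ha => funext fun n => h n a ha⟩
  rw [entropyVec, hblock, shEntropy_block hp (fun ω (s : α) => ω s.1),
    mul_div_cancel_left₀ _ (by exact_mod_cast hN.ne')]

variable [Fintype E]

theorem entropyVec_insert_inEdges (hp : IsPMF p) (e : E) :
    code.entropyVec p (insert (Sum.inr e) (inEdges net e)) = code.entropyVec p (inEdges net e) := by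
  rw [entropyVec, entropyVec, jointEntropy_insert_eq_of_determined (blockPMF_isPMF hp N)]
  intro y y' hy
  obtain ⟨φ, hφ⟩ := code.localEnc e
  change code.g e _ = code.g e _
  rw [hφ, hφ]
  congr 1
  · exact funext fun s => hy (Sum.inl s.1) (inl_mem_inEdges.mpr s.2)
  · exact funext fun f => hy (Sum.inr f.1) (inr_mem_inEdges.mpr f.2)

theorem entropyVec_insert_atNode_le (hp : IsPMF p) (hN : 0 < N) (s : S) (u : V) :
    code.entropyVec p (insert (Sum.inl s) (atNode net u)) ≤ code.entropyVec p (atNode net u) +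
      binEntropy (errProb net p code s u) / log 2 / N +
        errProb net p code s u * logb 2 (Fintype.card (𝒴 s)) := by
  have hμ := blockPMF_isPMF hp N
  let decode (x : (z : atNode net u) → code.Val z) : Fin N → 𝒴 s :=
    code.dec s u (fun s' => x ⟨Sum.inl s'.1, inl_mem_atNode.mpr s'.2⟩)
      (fun f => x ⟨Sum.inr f.1, inr_mem_atNode.mpr f.2⟩)
  have hfano : shEntropy (blockPMF p N) (fun y => (fun (z : atNode net u) => code.val z y,
      code.val (.inl s) y)) ≤ jointEntropy (blockPMF p N) code.val (atNode net u) +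
        binEntropy (errProb net p code s u) / log 2 +
          errProb net p code s u * (N * logb 2 (Fintype.card (𝒴 s))) := by
    have := shEntropy_prod_le_fano hμ (fun y (z : atNode net u) => code.val z y)
      (fun y n => y n s : _ → Fin N → 𝒴 s) decode
    rwa [Fintype.card_fun, Fintype.card_fin, Nat.cast_pow, logb_pow] at this
  have hN' : (0 : ℝ) < N := by exact_mod_cast hN
  rw [entropyVec, entropyVec, jointEntropy_insert hμ, div_le_iff₀ hN']
  have hexpand : ∀ a b c : ℝ, (a / N + b / N + c) * N = a + b + c * N := fun a b c => by
    field_simp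
  rw [hexpand]
  linarith

end NetworkCode

theorem binEntropy_div_add_mul_le {q ε N L : ℝ} (hq : 0 ≤ q) (hqε : q ≤ ε) (hε : ε ≤ 2⁻¹)
    (hN : 1 ≤ N) (hL : 0 ≤ L) :
    binEntropy q / log 2 / N + q * L ≤ binEntropy ε / log 2 + ε * L := by
  have hmono : binEntropy q ≤ binEntropy ε :=
    binEntropy_strictMonoOn.monotoneOn ⟨hq, hqε.trans hε⟩ ⟨hq.trans hqε, hε⟩ hqε
  have hnonneg : 0 ≤ binEntropy q / log 2 :=
    div_nonneg (binEntropy_nonneg hq (by linarith)) (log_nonneg one_le_two)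
  calc binEntropy q / log 2 / N + q * L ≤ binEntropy q / log 2 + q * L := by
        linarith [div_le_self hnonneg hN]
    _ ≤ binEntropy ε / log 2 + ε * L := by gcongr

theorem exists_binEntropy_slack_le {ι : Type*} [Finite ι] (L : ι → ℝ) {δ : ℝ} (hδ : 0 < δ) :
    ∃ ε, 0 < ε ∧ ε ≤ 2⁻¹ ∧ ε ≤ δ ∧ ∀ i, binEntropy ε / log 2 + ε * L i ≤ δ := by
  have hslack : ∀ i, ∀ᶠ ε in 𝓝[>] (0 : ℝ), binEntropy ε / log 2 + ε * L i ≤ δ := fun i => by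
    have hcont : Continuous fun ε => binEntropy ε / log 2 + ε * L i := by fun_prop
    have hlim := (hcont.tendsto 0).mono_left (nhdsWithin_le_nhds (s := Set.Ioi 0))
    simp only [binEntropy_zero, zero_div, zero_mul, add_zero] at hlim
    exact hlim.eventually (Iic_mem_nhds hδ)
  exact (eventually_mem_nhdsWithin.and <|
    ((eventually_le_nhds (by norm_num : (0 : ℝ) < 2⁻¹)).filter_mono nhdsWithin_le_nhds).and <|
    ((eventually_le_nhds hδ).filter_mono nhdsWithin_le_nhds).and <|
    eventually_all.mpr hslack).exists

theorem IsCompact.exists_mem_forall_of_monotone {X ι : Type*} [TopologicalSpace X] [T2Space X]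
    [Preorder ι] [IsDirected ι (· ≥ ·)] [Nonempty ι] {K : Set X} (hK : IsCompact K)
    {F : ι → Set X} (hF : Monotone F) (hcl : ∀ i, IsClosed (F i))
    (hne : ∀ i, (K ∩ F i).Nonempty) : ∃ x ∈ K, ∀ i, x ∈ F i := by
  obtain ⟨x, hx⟩ := IsCompact.nonempty_iInter_of_directed_nonempty_isCompact_isClosed
    (fun i => K ∩ F i) (Monotone.directed_ge fun i j hij => Set.inter_subset_inter_right K (hF hij)) hne
    (fun i => hK.inter_right (hcl i)) (fun i => hK.isClosed.inter (hcl i))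
  rw [Set.mem_iInter] at hx
  exact ⟨x, (hx (Classical.arbitrary ι)).1, fun i => (hx i).2⟩

theorem isClosed_setOf_isPolymatroid {Z : Type*} [DecidableEq Z] :
    IsClosed {h : Finset Z → ℝ | IsPolymatroid h} := by
  simp only [IsPolymatroid, Set.ofPred_and, Set.ofPred_forall]
  exact (isClosed_eq (continuous_apply _) continuous_const).inter <|
    (isClosed_iInter fun A => isClosed_le continuous_const (continuous_apply A)).inter <|
    (isClosed_iInter fun A => isClosed_iInter fun B => isClosed_iInter fun _ =>
      isClosed_le (continuous_apply A) (continuous_apply B)).inter <|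
    isClosed_iInter fun A => isClosed_iInter fun B =>
      isClosed_le ((continuous_apply (A ∩ B)).add (continuous_apply (A ∪ B)))
        ((continuous_apply A).add (continuous_apply B))

section LPBound

variable {V S E : Type} [Fintype S] [Fintype E] [DecidableEq S] [DecidableEq E]
  {net : Network V S E} {𝒴 : S → Type} [∀ s, Fintype (𝒴 s)] {p : (∀ s, 𝒴 s) → ℝ} {C : E → ℝ}

def lpRegion (net : Network V S E) (p : (∀ s, 𝒴 s) → ℝ) (C : E → ℝ) (δ : ℝ) :
    Set (Finset (S ⊕ E) → ℝ) :=
  {h | IsPolymatroid h ∧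
    (∀ α : Finset S, h (α.image Sum.inl) = shEntropy p (fun y (s : {x // x ∈ α}) => y s.1)) ∧
    (∀ e : E, h (insert (Sum.inr e) (inEdges net e)) = h (inEdges net e)) ∧
    (∀ s : S, ∀ u ∈ net.snk s, h (insert (Sum.inl s) (atNode net u)) ≤ h (atNode net u) + δ) ∧
    ∀ e : E, h {Sum.inr e} ≤ C e + δ}

theorem lpRegion_mono : Monotone (lpRegion net p C) :=
  fun _ _ hδ _ ⟨hpoly, hsrc, henc, hdec, hcap⟩ =>
    ⟨hpoly, hsrc, henc, fun s u hu => (hdec s u hu).trans (by linarith),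
      fun e => (hcap e).trans (by linarith)⟩

theorem isClosed_lpRegion (δ : ℝ) : IsClosed (lpRegion net p C δ) := by
  simp only [lpRegion, Set.ofPred_and, Set.ofPred_forall]
  refine isClosed_setOf_isPolymatroid.inter <| .inter ?_ <| .inter ?_ <| .inter ?_ ?_
  · exact isClosed_iInter fun α => isClosed_eq (continuous_apply _) continuous_const
  · exact isClosed_iInter fun e =>
      isClosed_eq (continuous_apply (insert (Sum.inr e) (inEdges net e)))
        (continuous_apply (inEdges net e))
  · exact isClosed_iInter fun s => isClosed_iInter fun u => isClosed_iInter fun _ =>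
      isClosed_le (continuous_apply (insert (Sum.inl s) (atNode net u)))
        ((continuous_apply (atNode net u)).add continuous_const)
  · exact isClosed_iInter fun e => isClosed_le (continuous_apply {Sum.inr e}) continuous_const

theorem NetworkCode.entropyVec_mem_lpRegion {N : ℕ} (code : NetworkCode net 𝒴 N) (hp : IsPMF p)
    (hN : 0 < N) {ε δ : ℝ} (hε : ε ≤ 2⁻¹) (hεδ : ε ≤ δ)
    (hslack : ∀ s, binEntropy ε / log 2 + ε * logb 2 (Fintype.card (𝒴 s)) ≤ δ)
    (hrate : ∀ e, logb 2 (@Fintype.card (code.U e) (code.fintU e)) / N ≤ C e + ε)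
    (herr : ∀ s, ∀ u ∈ net.snk s, errProb net p code s u ≤ ε) :
    code.entropyVec p ∈ lpRegion net p C δ := by
  refine ⟨code.isPolymatroid_entropyVec hp, code.entropyVec_sources hp hN,
    code.entropyVec_insert_inEdges hp, fun s u hu => ?_,
    fun e => (code.entropyVec_singleton_inr_le hp e).trans ((hrate e).trans (by linarith))⟩
  have hL : 0 ≤ logb 2 (Fintype.card (𝒴 s)) :=
    div_nonneg (log_natCast_nonneg _) (log_nonneg one_le_two)
  have hslack' := binEntropy_div_add_mul_le (q := errProb net p code s u)
    (probOf_nonneg (blockPMF_isPMF hp N).1 _) (herr s u hu) hε (Nat.one_le_cast.mpr hN) hL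
  linarith [code.entropyVec_insert_atNode_le hp hN s u, hslack s]

theorem Achievable.exists_mem_lpRegion (hp : IsPMF p) (hach : Achievable net 𝒴 p C) {δ : ℝ}
    (hδ : 0 < δ) : (Set.Icc 0 (fun _ => shEntropy p id) ∩ lpRegion net p C δ).Nonempty := by
  obtain ⟨ε, hε, hε2, hεδ, hslack⟩ :=
    exists_binEntropy_slack_le (fun s => logb 2 (Fintype.card (𝒴 s))) hδ
  obtain ⟨N, hN, code, hrate, herr⟩ := hach ε hε
  exact ⟨code.entropyVec p,
    ⟨(code.isPolymatroid_entropyVec hp).2.1, code.entropyVec_le_shEntropy hp⟩,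
    code.entropyVec_mem_lpRegion hp hN hε2 hεδ hslack hrate herr⟩

end LPBound

theorem achievable_implies_LP_outer_bound_general
    {V S E : Type} [Fintype S] [Fintype E] [DecidableEq S] [DecidableEq E]
    (net : Network V S E) (𝒴 : S → Type) [∀ s, Fintype (𝒴 s)]
    (p : (∀ s, 𝒴 s) → ℝ) (hp : IsPMF p)
    (C : E → ℝ)
    (hach : Achievable net 𝒴 p C) :
    ∃ h : Finset (S ⊕ E) → ℝ, IsPolymatroid h ∧
      (∀ α : Finset S,
        h (α.image Sum.inl) = shEntropy p (fun y (s : {x // x ∈ α}) => y s.1)) ∧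
      (∀ e : E, h (insert (Sum.inr e) (inEdges net e)) = h (inEdges net e)) ∧
      (∀ s : S, ∀ u ∈ net.snk s,
        h (insert (Sum.inl s) (atNode net u)) = h (atNode net u)) ∧
      (∀ e : E, h {Sum.inr e} ≤ C e) := by
  obtain ⟨h, -, hh⟩ := IsCompact.exists_mem_forall_of_monotone
    (isCompact_Icc (a := 0) (b := fun _ => shEntropy p id))
    (F := fun δ : Set.Ioi (0 : ℝ) => lpRegion net p C δ) (fun _ _ hδ => lpRegion_mono hδ)
    (fun δ => isClosed_lpRegion δ) (fun δ => hach.exists_mem_lpRegion hp δ.2)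
  obtain ⟨hpoly, hsrc, henc, -, -⟩ := hh ⟨1, Set.mem_Ioi.mpr one_pos⟩
  refine ⟨h, hpoly, hsrc, henc, fun s u hu => le_antisymm ?_ (hpoly.2.2.1 _ _ (subset_insert _ _)),
    fun e => ?_⟩
  · exact le_of_forall_pos_le_add fun δ hδ => (hh ⟨δ, Set.mem_Ioi.mpr hδ⟩).2.2.2.1 s u hu
  · exact le_of_forall_pos_le_add fun δ hδ => (hh ⟨δ, Set.mem_Ioi.mpr hδ⟩).2.2.2.2 e

/-- LP outer bound, Theorem 1 of the paper: if the capacity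
tuple `C` is achievable for a network with correlated sources, then there is a
polymatroid `h` on the ground set `S ⊕ E` which matches the joint source
entropies on subsets of `S`, respects the functional (encoding and decoding)
constraints, and satisfies `h(e) ≤ C e` on every edge; i.e.
`R_cs ⊆ R_cs(Γ)`. -/
theorem achievable_implies_LP_outer_bound
    {V S E : Type} [Fintype S] [Fintype E] [DecidableEq S] [DecidableEq E]
    (net : Network V S E) (𝒴 : S → Type) [∀ s, Fintype (𝒴 s)]
    (p : (∀ s, 𝒴 s) → ℝ) (hp : IsPMF p)
    (C : E → ℝ) (hCpos : ∀ e, 0 < C e)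
    (hach : Achievable net 𝒴 p C) :
    ∃ h : Finset (S ⊕ E) → ℝ, IsPolymatroid h ∧
      (∀ α : Finset S,
        h (α.image Sum.inl) = shEntropy p (fun y (s : {x // x ∈ α}) => y s.1)) ∧
      (∀ e : E, h (insert (Sum.inr e) (inEdges net e)) = h (inEdges net e)) ∧
      (∀ s : S, ∀ u ∈ net.snk s,
        h (insert (Sum.inl s) (atNode net u)) = h (atNode net u)) ∧
      (∀ e : E, h {Sum.inr e} ≤ C e) :=
  achievable_implies_LP_outer_bound_general net 𝒴 p hp C hach
end

section
/- Let b_0, b_1, b_2 be independent uniform binary random variables and let h be the entropy function (in bits) of the seven random variables Y_{s1} = (b_0, b_1), Y_{s2} = (b_0, b_2), Y_{s3} = (b_0, b_1 ⊕ b_2), U_{e1} = b_0, U_{e2} = b_1, U_{e3} = b_2, U_{e4} = b_1 ⊕ b_2; that is, for W ⊆ {s1, s2, s3, e1, e2, e3, e4}, h(W) is the joint Shannon entropy of the variables indexed by W. Then h is a polymatroid and satisfies: h(s_i) = 2 for i = 1, 2, 3; h(s_i, s_j) = 3 for all i ≠ j; h(e_i | s1, s2, s3) = 0 for i = 1, 2,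 3, 4; h(s1 | e1, e2) = 0; h(s2 | e1, e3) = 0; h(s3 | e1, e4) = 0; and h(e_i) ≤ 1 for i = 1, 2, 3, 4. Consequently the link capacity tuple (C_1, C_2, C_3, C_4) = (1, 1, 1, 1) belongs to the LP outer bound R_cs(Γ) of the example network. -/
open scoped BigOperators

/-- The outcome space: three independent uniform bits `(b₀, b₁, b₂)`. -/
noncomputable def μ3 : Bool × Bool × Bool → ℝ := fun _ => 1 / 8

/-- The seven random variables of the example network (indices
`0,1,2 ↦ Y_{s1}, Y_{s2}, Y_{s3}` and `3,4,5,6 ↦ U_{e1}, U_{e2}, U_{e3}, U_{e4}`):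
`Y_{s1} = (b₀,b₁)`, `Y_{s2} = (b₀,b₂)`, `Y_{s3} = (b₀, b₁ ⊕ b₂)`,
`U_{e1} = b₀`, `U_{e2} = b₁`, `U_{e3} = b₂`, `U_{e4} = b₁ ⊕ b₂`. -/
def exVars : Fin 7 → Bool × Bool × Bool → Bool × Bool
  | 0 => fun b => (b.1, b.2.1)
  | 1 => fun b => (b.1, b.2.2)
  | 2 => fun b => (b.1, xor b.2.1 b.2.2)
  | 3 => fun b => (b.1, false)
  | 4 => fun b => (b.2.1, false)
  | 5 => fun b => (b.2.2, false)
  | 6 => fun b => (xor b.2.1 b.2.2, false)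

/-- `hEx W` is the joint Shannon entropy (in bits) of the variables indexed by
`W ⊆ {s1,s2,s3,e1,e2,e3,e4}`. -/
noncomputable def hEx (W : Finset (Fin 7)) : ℝ :=
  shEntropy μ3 (fun ω (i : {x // x ∈ W}) => exVars i.1 ω)

/- ### auxiliary development -/


def jmap (W : Finset (Fin 7)) : Bool × Bool × Bool → ({x // x ∈ W} → Bool × Bool) :=
  fun ω i => exVars i.1 ω

def NW (W : Finset (Fin 7)) : ℕ := (Finset.univ.image (jmap W)).card

def F (p x y z : Bool) : ℕ :=
  (if p then 1 else 0) +
    min 2 ((if x then 1 else 0) + (if y then 1 else 0) + (if z then 1 else 0))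

def pP (W : Finset (Fin 7)) : Bool :=
  decide ((0:Fin 7) ∈ W) || decide ((1:Fin 7) ∈ W) || decide ((2:Fin 7) ∈ W) || decide ((3:Fin 7) ∈ W)
def xP (W : Finset (Fin 7)) : Bool := decide ((0:Fin 7) ∈ W) || decide ((4:Fin 7) ∈ W)
def yP (W : Finset (Fin 7)) : Bool := decide ((1:Fin 7) ∈ W) || decide ((5:Fin 7) ∈ W)
def zP (W : Finset (Fin 7)) : Bool := decide ((2:Fin 7) ∈ W) || decide ((6:Fin 7) ∈ W)

def rk (W : Finset (Fin 7)) : ℕ := F (pP W) (xP W) (yP W) (zP W)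

lemma probOf_eq {S : Type*} [DecidableEq S] (X : Bool × Bool × Bool → S) (v : S) :
    probOf μ3 {ω' | X ω' = v} =
      ((Finset.univ.filter fun ω' => X ω' = v).card : ℝ) / 8 := by
  classical
  simp only [probOf, μ3, Set.indicator_apply, Set.mem_setOf_eq]
  rw [Finset.sum_ite, Finset.sum_const, Finset.sum_const]
  simp [div_eq_mul_inv]

lemma entropy_eq {S : Type*} [DecidableEq S] (X : Bool × Bool × Bool → S) (N : ℕ)
    (h : ∀ ω, (Finset.univ.filter fun ω' => X ω' = X ω).card * N = 8) :
    shEntropy μ3 X = Real.logb 2 N := by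
  have hN : (N : ℝ) ≠ 0 := by
    have := h (false, false, false)
    intro h0
    rw [show N = 0 by exact_mod_cast h0, mul_zero] at this
    omega
  have key : ∀ ω, probOf μ3 {ω' | X ω' = X ω} = (N : ℝ)⁻¹ := by
    intro ω
    rw [probOf_eq]
    have := h ω
    have : ((Finset.univ.filter fun ω' => X ω' = X ω).card : ℝ) * N = 8 := by exact_mod_cast this
    field_simp
    linarith
  simp only [shEntropy, key, μ3, Real.logb_inv, neg_neg]
  rw [Finset.sum_const, Finset.card_univ]
  norm_num [Fintype.card_prod]
  ring

set_option maxRecDepth 100000 in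
set_option maxHeartbeats 1000000 in
lemma fib_check : ∀ W : Finset (Fin 7), ∀ ω : Bool × Bool × Bool,
    (Finset.univ.filter fun ω' => jmap W ω' = jmap W ω).card * NW W = 8 := by decide

set_option maxRecDepth 100000 in
set_option maxHeartbeats 1000000 in
lemma NW_pow : ∀ W : Finset (Fin 7), NW W = 2 ^ rk W := by decide

lemma hEx_eq (W : Finset (Fin 7)) : hEx W = (rk W : ℝ) := by
  have : hEx W = shEntropy μ3 (jmap W) := rfl
  rw [this, entropy_eq (jmap W) (NW W) (fib_check W), NW_pow W]
  push_cast
  rw [Real.logb_pow]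
  simp [Real.logb_self_eq_one]

lemma decide_or' (p q : Prop) [Decidable p] [Decidable q] :
    decide (p ∨ q) = (decide p || decide q) := by
  by_cases hp : p <;> by_cases hq : q <;> simp [hp, hq]

lemma decide_and' (p q : Prop) [Decidable p] [Decidable q] :
    decide (p ∧ q) = (decide p && decide q) := by
  by_cases hp : p <;> by_cases hq : q <;> simp [hp, hq]

lemma dec_mono {p q : Prop} [Decidable p] [Decidable q] (h : p → q) :
    decide p ≤ decide q := by
  by_cases hp : p
  · simp [hp, h hp]
  · simp [hp]

lemma Fmono : ∀ p p' x x' y y' z z' : Bool, p ≤ p' → x ≤ x' → y ≤ y' → z ≤ z' →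
    F p x y z ≤ F p' x' y' z' := by decide

lemma Fsub : ∀ p p' x x' y y' z z' : Bool,
    F (p && p') (x && x') (y && y') (z && z') + F (p || p') (x || x') (y || y') (z || z')
      ≤ F p x y z + F p' x' y' z' := by decide

lemma or4 : ∀ a0 a1 a2 a3 b0 b1 b2 b3 : Bool,
    ((a0 || b0) || (a1 || b1) || (a2 || b2) || (a3 || b3)) =
      ((a0 || a1 || a2 || a3) || (b0 || b1 || b2 || b3)) := by decide

lemma or2 : ∀ a0 a1 b0 b1 : Bool,
    ((a0 || b0) || (a1 || b1)) = ((a0 || a1) || (b0 || b1)) := by decide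

lemma and4 : ∀ a0 a1 a2 a3 b0 b1 b2 b3 : Bool,
    ((a0 && b0) || (a1 && b1) || (a2 && b2) || (a3 && b3)) ≤
      ((a0 || a1 || a2 || a3) && (b0 || b1 || b2 || b3)) := by decide

lemma and2 : ∀ a0 a1 b0 b1 : Bool,
    ((a0 && b0) || (a1 && b1)) ≤ ((a0 || a1) && (b0 || b1)) := by decide

lemma pP_union (A B : Finset (Fin 7)) : pP (A ∪ B) = (pP A || pP B) := by
  simp only [pP, Finset.mem_union, decide_or']; exact or4 _ _ _ _ _ _ _ _
lemma xP_union (A B : Finset (Fin 7)) : xP (A ∪ B) = (xP A || xP B) := by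
  simp only [xP, Finset.mem_union, decide_or']; exact or2 _ _ _ _
lemma yP_union (A B : Finset (Fin 7)) : yP (A ∪ B) = (yP A || yP B) := by
  simp only [yP, Finset.mem_union, decide_or']; exact or2 _ _ _ _
lemma zP_union (A B : Finset (Fin 7)) : zP (A ∪ B) = (zP A || zP B) := by
  simp only [zP, Finset.mem_union, decide_or']; exact or2 _ _ _ _

lemma pP_inter (A B : Finset (Fin 7)) : pP (A ∩ B) ≤ (pP A && pP B) := by
  simp only [pP, Finset.mem_inter, decide_and']; exact and4 _ _ _ _ _ _ _ _
lemma xP_inter (A B : Finset (Fin 7)) : xP (A ∩ B) ≤ (xP A && xP B) := by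
  simp only [xP, Finset.mem_inter, decide_and']; exact and2 _ _ _ _
lemma yP_inter (A B : Finset (Fin 7)) : yP (A ∩ B) ≤ (yP A && yP B) := by
  simp only [yP, Finset.mem_inter, decide_and']; exact and2 _ _ _ _
lemma zP_inter (A B : Finset (Fin 7)) : zP (A ∩ B) ≤ (zP A && zP B) := by
  simp only [zP, Finset.mem_inter, decide_and']; exact and2 _ _ _ _

lemma orMono : ∀ a a' b b' : Bool, a ≤ a' → b ≤ b' → (a || b) ≤ (a' || b') := by decide

lemma pP_mono {A B : Finset (Fin 7)} (h : A ⊆ B) : pP A ≤ pP B := by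
  unfold pP
  exact orMono _ _ _ _ (orMono _ _ _ _ (orMono _ _ _ _ (dec_mono (@h _)) (dec_mono (@h _)))
    (dec_mono (@h _))) (dec_mono (@h _))
lemma xP_mono {A B : Finset (Fin 7)} (h : A ⊆ B) : xP A ≤ xP B :=
  orMono _ _ _ _ (dec_mono (@h _)) (dec_mono (@h _))
lemma yP_mono {A B : Finset (Fin 7)} (h : A ⊆ B) : yP A ≤ yP B :=
  orMono _ _ _ _ (dec_mono (@h _)) (dec_mono (@h _))
lemma zP_mono {A B : Finset (Fin 7)} (h : A ⊆ B) : zP A ≤ zP B :=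
  orMono _ _ _ _ (dec_mono (@h _)) (dec_mono (@h _))

lemma rk_mono {A B : Finset (Fin 7)} (h : A ⊆ B) : rk A ≤ rk B :=
  Fmono _ _ _ _ _ _ _ _ (pP_mono h) (xP_mono h) (yP_mono h) (zP_mono h)

lemma rk_submod (A B : Finset (Fin 7)) : rk (A ∩ B) + rk (A ∪ B) ≤ rk A + rk B := by
  have h1 : rk (A ∩ B) ≤ F (pP A && pP B) (xP A && xP B) (yP A && yP B) (zP A && zP B) :=
    Fmono _ _ _ _ _ _ _ _ (pP_inter A B) (xP_inter A B) (yP_inter A B) (zP_inter A B)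
  have h2 : rk (A ∪ B) = F (pP A || pP B) (xP A || xP B) (yP A || yP B) (zP A || zP B) := by
    rw [rk, pP_union, xP_union, yP_union, zP_union]
  calc rk (A ∩ B) + rk (A ∪ B)
      ≤ F (pP A && pP B) (xP A && xP B) (yP A && yP B) (zP A && zP B) +
        F (pP A || pP B) (xP A || xP B) (yP A || yP B) (zP A || zP B) := by
        rw [h2]; exact Nat.add_le_add_right h1 _
    _ ≤ rk A + rk B := Fsub _ _ _ _ _ _ _ _


/-- the entropy function `hEx` of the seven listed random
variables is a polymatroid and satisfies `h(sᵢ) = 2`, `h(sᵢ,sⱼ) = 3` (i ≠ j),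
`h(eᵢ | s1,s2,s3) = 0`, `h(s1 | e1,e2) = h(s2 | e1,e3) = h(s3 | e1,e4) = 0`
and `h(eᵢ) ≤ 1`; consequently the link capacity tuple `(1,1,1,1)` belongs to
the LP outer bound `R_cs(Γ)` of the example network. -/
theorem example_network_entropy_function_in_LP_bound :
    IsPolymatroid hEx ∧
    (hEx {0} = 2 ∧ hEx {1} = 2 ∧ hEx {2} = 2) ∧
    (hEx {0, 1} = 3 ∧ hEx {0, 2} = 3 ∧ hEx {1, 2} = 3) ∧
    (∀ i ∈ ({3, 4, 5, 6} : Finset (Fin 7)), hEx (insert i {0, 1, 2}) = hEx {0, 1, 2}) ∧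
    (hEx (insert 0 {3, 4}) = hEx {3, 4}) ∧
    (hEx (insert 1 {3, 5}) = hEx {3, 5}) ∧
    (hEx (insert 2 {3, 6}) = hEx {3, 6}) ∧
    (∀ i ∈ ({3, 4, 5, 6} : Finset (Fin 7)), hEx {i} ≤ 1) := by
  refine ⟨⟨?_, ?_, ?_, ?_⟩, ⟨?_, ?_, ?_⟩, ⟨?_, ?_, ?_⟩, ?_, ?_, ?_, ?_, ?_⟩
  · rw [hEx_eq]; norm_num [show rk ∅ = 0 from by decide]
  · intro A; rw [hEx_eq]; positivity
  · intro A B h; rw [hEx_eq, hEx_eq]; exact_mod_cast rk_mono h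
  · intro A B; rw [hEx_eq, hEx_eq, hEx_eq, hEx_eq]; exact_mod_cast rk_submod A B
  · rw [hEx_eq]; norm_num [show rk {0} = 2 from by decide]
  · rw [hEx_eq]; norm_num [show rk {1} = 2 from by decide]
  · rw [hEx_eq]; norm_num [show rk {2} = 2 from by decide]
  · rw [hEx_eq]; norm_num [show rk {0, 1} = 3 from by decide]
  · rw [hEx_eq]; norm_num [show rk {0, 2} = 3 from by decide]
  · rw [hEx_eq]; norm_num [show rk {1, 2} = 3 from by decide]
  · intro i hi
    fin_cases hi <;> rw [hEx_eq, hEx_eq] <;> norm_cast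
  · rw [hEx_eq, hEx_eq]; norm_cast
  · rw [hEx_eq, hEx_eq]; norm_cast
  · rw [hEx_eq, hEx_eq]; norm_cast
  · intro i hi
    fin_cases hi <;> rw [hEx_eq] <;> norm_num [show rk {3} = 1 from by decide,
      show rk {4} = 1 from by decide, show rk {5} = 1 from by decide,
      show rk {6} = 1 from by decide]
end

section
/- There is no polymatroid h on the ten-element ground set {s1, s2, s3, e1, e2, e3, e4, k0, k1, k2} satisfying all of the following: h(s_i) = 2 for i = 1, 2, 3; h(s_i, s_j) = 3 for all i ≠ j in {1, 2, 3}; h({k_i : i ∈ α}) = |α| for every α ⊆ {0, 1, 2}; h(s1 | k0, k1) = 0; h(s2 | k0, k2) = 0; h(s3 | k1, k2) = 0; h(k0, k1) = h(s1); h(k0, k2) = h(s2); h(k1, k2) = h(s3); h(e_i | s1, s2, s3) = 0 for i = 1, 2, 3, 4; h(s1 | e1, e2) = 0; h(s2 | e1, e3) = 0; h(s3 | e1, e4) = 0; and h(e_i) ≤ 1 for i = 1, 2, 3, 4. Consequently the link capacity tuple (1, 1, 1, 1) does not belong to the improved LP bound R*_cs(Γ) of the example network, and hence is not achievable. -/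
open scoped BigOperators

/-- there is no polymatroid on the ten-element ground set
`{s1,s2,s3,e1,e2,e3,e4,k0,k1,k2}` (encoded as `Fin 10` with
`0,1,2 ↦ s1,s2,s3`, `3,4,5,6 ↦ e1,e2,e3,e4`, `7,8,9 ↦ k0,k1,k2`) satisfying
all the listed constraints of the improved LP bound; consequently the link
capacity tuple `(1,1,1,1)` is not in `R*_cs(Γ)` and hence is not achievable. -/
theorem no_polymatroid_for_improved_LP_constraints :
    ¬ ∃ h : Finset (Fin 10) → ℝ, IsPolymatroid h ∧
      (h {0} = 2 ∧ h {1} = 2 ∧ h {2} = 2) ∧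
      (h {0, 1} = 3 ∧ h {0, 2} = 3 ∧ h {1, 2} = 3) ∧
      (∀ α ⊆ ({7, 8, 9} : Finset (Fin 10)), h α = α.card) ∧
      (h (insert 0 {7, 8}) = h {7, 8}) ∧
      (h (insert 1 {7, 9}) = h {7, 9}) ∧
      (h (insert 2 {8, 9}) = h {8, 9}) ∧
      (h {7, 8} = h {0}) ∧ (h {7, 9} = h {1}) ∧ (h {8, 9} = h {2}) ∧
      (∀ i ∈ ({3, 4, 5, 6} : Finset (Fin 10)), h (insert i {0, 1, 2}) = h {0, 1, 2}) ∧
      (h (insert 0 {3, 4}) = h {3, 4}) ∧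
      (h (insert 1 {3, 5}) = h {3, 5}) ∧
      (h (insert 2 {3, 6}) = h {3, 6}) ∧
      (∀ i ∈ ({3, 4, 5, 6} : Finset (Fin 10)), h {i} ≤ 1) := by
  rintro ⟨h, ⟨h0, hnn, hmono, hsub⟩, ⟨hs1, hs2, hs3⟩, ⟨h01, h02, h12⟩, hK,
    hd1, hd2, hd3, hk1, hk2, hk3, hES, he1, he2, he3, hcap⟩
  -- helper: submodularity with computed intersection/union
  have sub : ∀ A B C D : Finset (Fin 10), A ∩ B = C → A ∪ B = D →
      h C + h D ≤ h A + h B := by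
    rintro A B C D rfl rfl; exact hsub A B
  -- basic K entropies
  have k789 : h {7, 8, 9} = 3 := by rw [hK {7, 8, 9} (by decide), show ({7, 8, 9} : Finset (Fin 10)).card = 3 from by decide]; norm_num
  have k78 : h {7, 8} = 2 := by rw [hk1, hs1]
  have k79 : h {7, 9} = 2 := by rw [hk2, hs2]
  have k89 : h {8, 9} = 2 := by rw [hk3, hs3]
  -- capacities
  have c3 : h {3} ≤ 1 := hcap 3 (by decide)
  have c4 : h {4} ≤ 1 := hcap 4 (by decide)
  have c5 : h {5} ≤ 1 := hcap 5 (by decide)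
  have c6 : h {6} ≤ 1 := hcap 6 (by decide)
  -- pairs of edges decode sources
  have p34u : h {3, 4} ≤ 2 := by
    have := sub {3} {4} ∅ {3, 4} (by decide) (by decide); linarith
  have p34l : (2 : ℝ) ≤ h {3, 4} := by
    have := hmono {0} {0, 3, 4} (by decide); rw [he1] at this; linarith
  have p35u : h {3, 5} ≤ 2 := by
    have := sub {3} {5} ∅ {3, 5} (by decide) (by decide); linarith
  have p35l : (2 : ℝ) ≤ h {3, 5} := by
    have := hmono {1} {1, 3, 5} (by decide); rw [he2] at this; linarith
  have p36u : h {3, 6} ≤ 2 := by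
    have := sub {3} {6} ∅ {3, 6} (by decide) (by decide); linarith
  have p36l : (2 : ℝ) ≤ h {3, 6} := by
    have := hmono {2} {2, 3, 6} (by decide); rw [he3] at this; linarith
  have e3one : (1 : ℝ) ≤ h {3} := by
    have := sub {3} {4} ∅ {3, 4} (by decide) (by decide); linarith
  -- triples of edges determine two sources, hence all three
  have t345 : (3 : ℝ) ≤ h {3, 4, 5} := by
    have a1 := sub {0, 3, 4} {3, 4, 5} {3, 4} {0, 3, 4, 5} (by decide) (by decide)
    have a2 := sub {1, 3, 5} {0, 3, 4, 5} {3, 5} {0, 1, 3, 4, 5} (by decide) (by decide)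
    have a3 := hmono {0, 1} {0, 1, 3, 4, 5} (by decide)
    rw [he1] at a1; rw [he2] at a2; linarith
  have t346 : (3 : ℝ) ≤ h {3, 4, 6} := by
    have a1 := sub {0, 3, 4} {3, 4, 6} {3, 4} {0, 3, 4, 6} (by decide) (by decide)
    have a2 := sub {2, 3, 6} {0, 3, 4, 6} {3, 6} {0, 2, 3, 4, 6} (by decide) (by decide)
    have a3 := hmono {0, 2} {0, 2, 3, 4, 6} (by decide)
    rw [he1] at a1; rw [he3] at a2; linarith
  have t356 : (3 : ℝ) ≤ h {3, 5, 6} := by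
    have a1 := sub {1, 3, 5} {3, 5, 6} {3, 5} {1, 3, 5, 6} (by decide) (by decide)
    have a2 := sub {2, 3, 6} {1, 3, 5, 6} {3, 6} {1, 2, 3, 5, 6} (by decide) (by decide)
    have a3 := hmono {1, 2} {1, 2, 3, 5, 6} (by decide)
    rw [he2] at a1; rw [he3] at a2; linarith
  -- each key is a function of the sources that contain it
  have f07 : h {0, 7} ≤ 2 := by
    have := hmono {0, 7} {0, 7, 8} (by decide); rw [hd1, k78] at this; exact this
  have f08 : h {0, 8} ≤ 2 := by
    have := hmono {0, 8} {0, 7, 8} (by decide); rw [hd1, k78] at this; exact this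
  have f17 : h {1, 7} ≤ 2 := by
    have := hmono {1, 7} {1, 7, 9} (by decide); rw [hd2, k79] at this; exact this
  have f19 : h {1, 9} ≤ 2 := by
    have := hmono {1, 9} {1, 7, 9} (by decide); rw [hd2, k79] at this; exact this
  have f28 : h {2, 8} ≤ 2 := by
    have := hmono {2, 8} {2, 8, 9} (by decide); rw [hd3, k89] at this; exact this
  have f29 : h {2, 9} ≤ 2 := by
    have := hmono {2, 9} {2, 8, 9} (by decide); rw [hd3, k89] at this; exact this
  -- each key together with a decoding pair of edges
  have q347 : h {3, 4, 7} ≤ 2 := by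
    have a1 := sub {0, 7} {0, 3, 4} {0} {0, 3, 4, 7} (by decide) (by decide)
    have a2 := hmono {3, 4, 7} {0, 3, 4, 7} (by decide)
    rw [he1] at a1; linarith
  have q357 : h {3, 5, 7} ≤ 2 := by
    have a1 := sub {1, 7} {1, 3, 5} {1} {1, 3, 5, 7} (by decide) (by decide)
    have a2 := hmono {3, 5, 7} {1, 3, 5, 7} (by decide)
    rw [he2] at a1; linarith
  have q348 : h {3, 4, 8} ≤ 2 := by
    have a1 := sub {0, 8} {0, 3, 4} {0} {0, 3, 4, 8} (by decide) (by decide)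
    have a2 := hmono {3, 4, 8} {0, 3, 4, 8} (by decide)
    rw [he1] at a1; linarith
  have q368 : h {3, 6, 8} ≤ 2 := by
    have a1 := sub {2, 8} {2, 3, 6} {2} {2, 3, 6, 8} (by decide) (by decide)
    have a2 := hmono {3, 6, 8} {2, 3, 6, 8} (by decide)
    rw [he3] at a1; linarith
  have q359 : h {3, 5, 9} ≤ 2 := by
    have a1 := sub {1, 9} {1, 3, 5} {1} {1, 3, 5, 9} (by decide) (by decide)
    have a2 := hmono {3, 5, 9} {1, 3, 5, 9} (by decide)
    rw [he2] at a1; linarith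
  have q369 : h {3, 6, 9} ≤ 2 := by
    have a1 := sub {2, 9} {2, 3, 6} {2} {2, 3, 6, 9} (by decide) (by decide)
    have a2 := hmono {3, 6, 9} {2, 3, 6, 9} (by decide)
    rw [he3] at a1; linarith
  -- hence each key is a function of edge e1 alone
  have r37 : h {3, 7} ≤ 1 := by
    have a1 := sub {3, 4, 7} {3, 5, 7} {3, 7} {3, 4, 5, 7} (by decide) (by decide)
    have a2 := hmono {3, 4, 5} {3, 4, 5, 7} (by decide)
    linarith
  have r38 : h {3, 8} ≤ 1 := by
    have a1 := sub {3, 4, 8} {3, 6, 8} {3, 8} {3, 4, 6, 8} (by decide) (by decide)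
    have a2 := hmono {3, 4, 6} {3, 4, 6, 8} (by decide)
    linarith
  have r39 : h {3, 9} ≤ 1 := by
    have a1 := sub {3, 5, 9} {3, 6, 9} {3, 9} {3, 5, 6, 9} (by decide) (by decide)
    have a2 := hmono {3, 5, 6} {3, 5, 6, 9} (by decide)
    linarith
  -- so all three keys are functions of e1, contradicting h(k0,k1,k2)=3
  have w1 := sub {3, 7} {3, 8} {3} {3, 7, 8} (by decide) (by decide)
  have w2 := sub {3, 7, 8} {3, 9} {3} {3, 7, 8, 9} (by decide) (by decide)
  have w3 := hmono {7, 8, 9} {3, 7, 8, 9} (by decide)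
  linarith
end

section
/- Let X be a random variable with support N_n = {1,…,n}, n ≥ 3, and p_1 ≥ … ≥ p_n > 0, with binary partition random variables (A_⟨α⟩, ⟨α⟩ ∈ Ω). Then for every i with 2 ≤ i ≤ n, H(A_⟨{i}⟩ | (A_⟨{j}⟩ : i < j ≤ n)) > 0. -/
open scoped BigOperators

/-- The binary partition random variable `A_⟨α⟩` of a random variable on
`Fin n` (the probability space is taken to be `Fin n` itself, with `X` the
identity): `A_⟨α⟩` records whether `X ∈ α` or `X ∈ αᶜ`.  Unordered partitions
`⟨α⟩ = {α, αᶜ}` are represented by the part `α` not containing the first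
element `0` (the paper's convention `1 ∉ α`). -/
def bpVar {n : ℕ} (α : Finset (Fin n)) : Fin n → Bool := fun x => decide (x ∈ α)


lemma probOf_le_probOf {Ω : Type*} [Fintype Ω] {μ : Ω → ℝ} (hμ : ∀ ω, 0 ≤ μ ω)
    {E F : Set Ω} (h : E ⊆ F) : probOf μ E ≤ probOf μ F :=
  Finset.sum_le_sum fun a _ => Set.indicator_le_indicator_of_subset h (fun a => hμ a) a

lemma le_probOf {Ω : Type*} [Fintype Ω] {μ : Ω → ℝ} (hμ : ∀ ω, 0 ≤ μ ω)
    {E : Set Ω} {ω : Ω} (h : ω ∈ E) : μ ω ≤ probOf μ E := by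
  have := Finset.single_le_sum (f := E.indicator μ)
    (fun a _ => Set.indicator_nonneg (fun a _ => hμ a) a) (Finset.mem_univ ω)
  rwa [Set.indicator_of_mem h] at this

lemma probOf_lt_probOf {Ω : Type*} [Fintype Ω] {μ : Ω → ℝ} (hμ : ∀ ω, 0 ≤ μ ω)
    {E F : Set Ω} (h : E ⊆ F) {ω : Ω} (hωF : ω ∈ F) (hωE : ω ∉ E) (hpos : 0 < μ ω) :
    probOf μ E < probOf μ F :=
  Finset.sum_lt_sum (fun a _ => Set.indicator_le_indicator_of_subset h (fun a => hμ a) a)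
    ⟨ω, Finset.mem_univ ω, by
      rw [Set.indicator_of_mem hωF, Set.indicator_of_notMem hωE]; exact hpos⟩

/-- Proposition 1(1): for a random variable with support
`{1, …, n}`, `n ≥ 3`, and masses `p_1 ≥ … ≥ p_n > 0`, for every `i ≥ 2`
(encoded as `i : Fin n` with `i.1 ≥ 1`), the indicator `A_⟨{i}⟩` has positive
conditional entropy given all indicators `A_⟨{j}⟩` with `j > i`. -/
theorem indicator_cond_entropy_pos {n : ℕ} [NeZero n] (hn : 3 ≤ n)
    (p : Fin n → ℝ) (hp : ∀ i, 0 < p i) (hsum : ∑ i, p i = 1)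
    (hmono : ∀ i j : Fin n, i ≤ j → p j ≤ p i)
    (i : Fin n) (hi : 1 ≤ i.1) :
    0 < shCondEntropy p (bpVar {i})
        (fun x (j : {j : Fin n // i < j}) => bpVar {j.1} x) := by
  
  classical
  set X : Fin n → {j : Fin n // i < j} → Bool := fun x j => bpVar {j.1} x with hX
  set Y : Fin n → Bool := bpVar {i} with hY
  set Z : Fin n → (({j : Fin n // i < j} → Bool) × Bool) := fun ω => (X ω, Y ω) with hZ
  have hpnn : ∀ ω, 0 ≤ p ω := fun ω => (hp ω).le
  -- event inclusion
  have hsub : ∀ ω : Fin n, {ω' | Z ω' = Z ω} ⊆ {ω' | X ω' = X ω} := by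
    intro ω ω' h
    simp only [Set.mem_setOf_eq, hZ, Prod.mk.injEq] at h ⊢
    exact h.1
  have hmemZ : ∀ ω : Fin n, ω ∈ {ω' | Z ω' = Z ω} := fun ω => rfl
  have hmemX : ∀ ω : Fin n, ω ∈ {ω' | X ω' = X ω} := fun ω => rfl
  have hZpos : ∀ ω : Fin n, 0 < probOf p {ω' | Z ω' = Z ω} :=
    fun ω => lt_of_lt_of_le (hp ω) (le_probOf hpnn (hmemZ ω))
  have hXpos : ∀ ω : Fin n, 0 < probOf p {ω' | X ω' = X ω} :=
    fun ω => lt_of_lt_of_le (hZpos ω) (probOf_le_probOf hpnn (hsub ω))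
  have key : shCondEntropy p Y X =
      ∑ ω, (p ω * (- Real.logb 2 (probOf p {ω' | Z ω' = Z ω}))
        - p ω * (- Real.logb 2 (probOf p {ω' | X ω' = X ω}))) := by
    rw [Finset.sum_sub_distrib]
    rfl
  rw [key]
  apply Finset.sum_pos'
  · intro ω _
    have hlog : Real.logb 2 (probOf p {ω' | Z ω' = Z ω})
        ≤ Real.logb 2 (probOf p {ω' | X ω' = X ω}) :=
      Real.logb_le_logb_of_le one_lt_two (hZpos ω) (probOf_le_probOf hpnn (hsub ω))
    nlinarith [hpnn ω]
  · refine ⟨i, Finset.mem_univ i, ?_⟩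
    have h0 : (0 : Fin n) ∈ {ω' | X ω' = X i} := by
      simp only [Set.mem_setOf_eq, hX]
      funext j
      have h1 : (0 : Fin n) ≠ j.1 := by
        intro h
        have hj : i.1 < (j.1 : Fin n).1 := j.2
        rw [← h] at hj
        simp at hj
      have h2 : i ≠ j.1 := ne_of_lt j.2
      simp [bpVar, Finset.mem_singleton, h1, h2]
    have h0' : (0 : Fin n) ∉ {ω' | Z ω' = Z i} := by
      simp only [Set.mem_setOf_eq, hZ, Prod.mk.injEq, not_and]
      intro _
      have hne : (0 : Fin n) ≠ i := by
        intro h; rw [← h] at hi; simp [Fin.val_zero] at hi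
      simp [hY, bpVar, Finset.mem_singleton, hne]
    have hlt : probOf p {ω' | Z ω' = Z i} < probOf p {ω' | X ω' = X i} :=
      probOf_lt_probOf hpnn (hsub i) h0 h0' (hp 0)
    have hlog : Real.logb 2 (probOf p {ω' | Z ω' = Z i})
        < Real.logb 2 (probOf p {ω' | X ω' = X i}) :=
      Real.logb_lt_logb one_lt_two (hZpos i) hlt
    nlinarith [hp i]
end

section
/- Let X be a random variable with support N_n = {1,…,n}, n ≥ 3, and p_1 ≥ … ≥ p_n > 0, with binary partition random variables (A_⟨α⟩, ⟨α⟩ ∈ Ω). Fix i with 2 ≤ i ≤ n. Then for every ⟨α⟩ ∈ Ω such that H(A_⟨α⟩ | (A_⟨{j}⟩ : i < j ≤ n)) > 0, one has H(A_⟨{i}⟩) ≤ H(A_⟨α⟩). -/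
open scoped BigOperators

lemma shCondEntropy_comp_eq_zero {Ω S T : Type*} [Fintype Ω] (μ : Ω → ℝ)
    (X : Ω → S) (f : S → T) :
    shCondEntropy μ (fun ω => f (X ω)) X = 0 := by
  unfold shCondEntropy
  rw [sub_eq_zero]
  unfold shEntropy
  refine Finset.sum_congr rfl fun ω _ => ?_
  have : ({ω' | (X ω', f (X ω')) = (X ω, f (X ω))} : Set Ω) = {ω' | X ω' = X ω} := by
    ext ω'
    simp only [Set.mem_setOf_eq, Prod.mk.injEq]
    exact ⟨fun h => h.1, fun h => ⟨h, by rw [h]⟩⟩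
  rw [this]

lemma entropy_bpVar {n : ℕ} (p : Fin n → ℝ) (hsum : ∑ i, p i = 1) (β : Finset (Fin n)) :
    shEntropy p (bpVar β) = Real.binEntropy (∑ x ∈ β, p x) / Real.log 2 := by
  classical
  set s := ∑ x ∈ β, p x with hs
  have hprob : ∀ E : Finset (Fin n), probOf p (↑E) = ∑ x ∈ E, p x := by
    intro E
    simp [probOf, Set.indicator_apply, Finset.sum_ite_mem]
  have hcompl : ∑ x ∈ βᶜ, p x = 1 - s := by
    have := Finset.sum_add_sum_compl β p
    rw [hsum] at this
    linarith
  have hmem : ∀ ω : Fin n, probOf p {ω' | bpVar β ω' = bpVar β ω}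
      = if ω ∈ β then s else 1 - s := by
    intro ω
    by_cases h : ω ∈ β
    · have hset : ({ω' | bpVar β ω' = bpVar β ω} : Set (Fin n)) = ↑β := by
        ext ω'; simp [bpVar, h]
      rw [hset, hprob, if_pos h]
    · have hset : ({ω' | bpVar β ω' = bpVar β ω} : Set (Fin n)) = ↑(βᶜ) := by
        ext ω'; simp [bpVar, h]
      rw [hset, hprob, hcompl, if_neg h]
  have step : shEntropy p (bpVar β)
      = ∑ ω, (if ω ∈ β then p ω * (-Real.logb 2 s) else p ω * (-Real.logb 2 (1 - s))) := by
    unfold shEntropy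
    refine Finset.sum_congr rfl fun ω _ => ?_
    rw [hmem ω]
    by_cases h : ω ∈ β <;> simp [h]
  rw [step, Finset.sum_ite, ← Finset.sum_mul, ← Finset.sum_mul]
  have h1 : Finset.univ.filter (· ∈ β) = β := by ext x; simp
  have h2 : Finset.univ.filter (¬ · ∈ β) = βᶜ := by ext x; simp
  rw [h1, h2, ← hs, hcompl]
  rw [Real.binEntropy, Real.log_inv, Real.log_inv, Real.logb, Real.logb]
  ring

/-- Proposition 1(2): for a random variable with support
`{1, …, n}`, `n ≥ 3`, masses `p_1 ≥ … ≥ p_n > 0`, and `i ≥ 2` (encoded as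
`i : Fin n` with `i.1 ≥ 1`): every partition `⟨α⟩` with
`H(A_⟨α⟩ | A_⟨{j}⟩, j > i) > 0` satisfies `H(A_⟨{i}⟩) ≤ H(A_⟨α⟩)`. -/
theorem indicator_entropy_minimal {n : ℕ} [NeZero n] (hn : 3 ≤ n)
    (p : Fin n → ℝ) (hp : ∀ i, 0 < p i) (hsum : ∑ i, p i = 1)
    (hmono : ∀ i j : Fin n, i ≤ j → p j ≤ p i)
    (i : Fin n) (hi : 1 ≤ i.1)
    (α : Finset (Fin n)) (hαne : α.Nonempty) (hα0 : 0 ∉ α)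
    (hα : 0 < shCondEntropy p (bpVar α)
        (fun x (j : {j : Fin n // i < j}) => bpVar {j.1} x)) :
    shEntropy p (bpVar {i}) ≤ shEntropy p (bpVar α) := by
  classical
  -- Step 1: there is some k ∈ α with k ≤ i.
  have hk : ∃ k ∈ α, k ≤ i := by
    by_contra hcon
    push_neg at hcon
    set X : Fin n → ({j : Fin n // i < j} → Bool) :=
      fun x (j : {j : Fin n // i < j}) => bpVar {j.1} x with hX
    set f : ({j : Fin n // i < j} → Bool) → Bool :=
      fun g => decide (∃ j : {j : Fin n // i < j}, j.1 ∈ α ∧ g j = true) with hf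
    have hfe : bpVar α = fun x => f (X x) := by
      funext x
      show decide (x ∈ α) = _
      simp only [hf, hX, bpVar]
      rw [decide_eq_decide]
      constructor
      · intro hx
        exact ⟨⟨x, hcon x hx⟩, hx, by simp⟩
      · rintro ⟨j, hj, hxj⟩
        rw [decide_eq_true_eq, Finset.mem_singleton] at hxj
        rwa [hxj]
    rw [hfe, shCondEntropy_comp_eq_zero] at hα
    exact lt_irrefl 0 hα
  obtain ⟨k, hkα, hki⟩ := hk
  set s := ∑ x ∈ α, p x with hs
  have hpnn : ∀ x : Fin n, 0 ≤ p x := fun x => (hp x).le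
  -- basic inequalities
  have hps : p i ≤ s := le_trans (hmono k i hki)
    (Finset.single_le_sum (fun x _ => hpnn x) hkα)
  have hs1 : p 0 + s ≤ 1 := by
    have h1 : ∑ x ∈ insert 0 α, p x = p 0 + s := Finset.sum_insert hα0
    have h2 : ∑ x ∈ insert 0 α, p x ≤ ∑ x, p x :=
      Finset.sum_le_sum_of_subset_of_nonneg (Finset.subset_univ _) (fun x _ _ => hpnn x)
    rw [hsum] at h2; linarith
  have h0i : (0 : Fin n) ≠ i := by
    intro h; rw [← h] at hi; simp at hi
  have hp0i : p 0 + p i ≤ 1 := by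
    have h1 : ∑ x ∈ ({0, i} : Finset (Fin n)), p x = p 0 + p i := Finset.sum_pair h0i
    have h2 : ∑ x ∈ ({0, i} : Finset (Fin n)), p x ≤ ∑ x, p x :=
      Finset.sum_le_sum_of_subset_of_nonneg (Finset.subset_univ _) (fun x _ _ => hpnn x)
    rw [hsum] at h2; linarith
  have hpi0 : p i ≤ p 0 := hmono 0 i (by simp [Fin.le_def])
  have hpi_half : p i ≤ 2⁻¹ := by linarith
  have hp0 := hp 0
  have hsub : s ≤ 1 - p i := by linarith
  -- binary entropy comparison
  have key : Real.binEntropy (p i) ≤ Real.binEntropy s := by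
    rcases le_or_gt s 2⁻¹ with h | h
    · exact Real.binEntropy_strictMonoOn.monotoneOn
        ⟨hpnn i, hpi_half⟩ ⟨le_trans (hpnn i) hps, h⟩ hps
    · rw [← Real.binEntropy_one_sub s]
      exact Real.binEntropy_strictMonoOn.monotoneOn
        ⟨hpnn i, hpi_half⟩ ⟨by linarith, by linarith⟩ (by linarith)
  rw [entropy_bpVar p hsum, entropy_bpVar p hsum, Finset.sum_singleton, ← hs]
  have hlog2 : (0:ℝ) < Real.log 2 := Real.log_pos one_lt_two
  exact div_le_div_of_nonneg_right key hlog2.le |>.trans_eq rfl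
end

section
/- Let X be a random variable with support N_n = {1,…,n}, n ≥ 3, and p_1 ≥ … ≥ p_n > 0, with binary partition random variables (A_⟨α⟩, ⟨α⟩ ∈ Ω). If ⟨α⟩ ∈ Ω is such that H(A_⟨α⟩ | (A_⟨{j}⟩ : j ∈ β)) > 0 for every proper subset β of {2, …, n}, then A_⟨α⟩ = A_⟨{1}⟩, i.e., ⟨α⟩ is the partition {{1}, {2,…,n}}. -/
open scoped BigOperators

lemma shCondEntropy_eq_zero_of_determined {Ω S T : Type*} [Fintype Ω] (μ : Ω → ℝ)
    (Y : Ω → T) (X : Ω → S) (h : ∀ ω ω', X ω = X ω' → Y ω = Y ω') :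
    shCondEntropy μ Y X = 0 := by
  unfold shCondEntropy shEntropy
  have key : ∀ ω : Ω, ({ω' | (X ω', Y ω') = (X ω, Y ω)} : Set Ω) = {ω' | X ω' = X ω} := by
    intro ω
    ext ω'
    simp only [Set.mem_setOf_eq, Prod.mk.injEq]
    exact ⟨fun h1 => h1.1, fun h1 => ⟨h1, h ω' ω h1⟩⟩
  simp only [key, sub_self]

/-- Proposition 1(4): for a random variable with support
`{1, …, n}`, `n ≥ 3`, and masses `p_1 ≥ … ≥ p_n > 0`: if the partition random
variable `A_⟨α⟩` satisfies `H(A_⟨α⟩ | A_⟨{j}⟩, j ∈ β) > 0` for every proper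
subset `β` of `{2, …, n}` (encoded as `{0}ᶜ ⊆ Fin n`), then
`A_⟨α⟩ = A_⟨{1}⟩`, i.e. `⟨α⟩` is the partition `{{1}, {2, …, n}}`
(with the convention `1 ∉ α`, this reads `α = {0}ᶜ`). -/
theorem bpVar_first_indicator {n : ℕ} [NeZero n] (hn : 3 ≤ n)
    (p : Fin n → ℝ) (hp : ∀ i, 0 < p i) (hsum : ∑ i, p i = 1)
    (hmono : ∀ i j : Fin n, i ≤ j → p j ≤ p i)
    (α : Finset (Fin n)) (hαne : α.Nonempty) (hα0 : 0 ∉ α)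
    (hα : ∀ β : Finset (Fin n), β ⊂ ({0} : Finset (Fin n))ᶜ →
      0 < shCondEntropy p (bpVar α)
          (fun x (j : {j : Fin n // j ∈ β}) => bpVar {j.1} x)) :
    α = ({0} : Finset (Fin n))ᶜ := by
  by_contra hne
  have hsub : α ⊆ ({0} : Finset (Fin n))ᶜ := by
    intro x hx
    simp only [Finset.mem_compl, Finset.mem_singleton]
    rintro rfl; exact hα0 hx
  have hss : α ⊂ ({0} : Finset (Fin n))ᶜ := ⟨hsub, fun h => hne (le_antisymm hsub h)⟩
  have hpos := hα α hss
  rw [shCondEntropy_eq_zero_of_determined] at hpos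
  · exact lt_irrefl 0 hpos
  · intro ω ω' hxy
    simp only [bpVar, decide_eq_decide]
    constructor
    · intro hω
      have := congrFun hxy ⟨ω, hω⟩
      simp only [bpVar, Finset.mem_singleton, decide_eq_decide] at this
      rwa [this.mp trivial]
    · intro hω'
      have := congrFun hxy ⟨ω', hω'⟩
      simp only [bpVar, Finset.mem_singleton, decide_eq_decide] at this
      rwa [this.mpr trivial]
end
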